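/- arXiv:1309.5977 — 9 statements merged into one kernel-verified Lean document; each statement's English description precedes it below -/
import Mathlib

section
/- For all distinct x, y ∈ int(K), the Riemannian distance induced by a ν-self-concordant barrier F is bounded by the Hilbert metric: ρ(x, y) ≤ 2(1 + 3ν) · ln(1 + σ(x, y)); in particular ρ(x,y) ≤ 2(1+3ν)·σ(x,y). -/
/-!
Along the chord `u ↦ p + u • (q - p)`, `0 < u < 1`, the barrier restricts to a function `f` with
`f'² ≤ ν f''` and `-f''' ≤ 2 f''^{3/2}`. The first inequality makes `1 / f' + u / ν` decreasing,
which bounds the gradient by the distance to the ends: `f'(u) (1 - u) ≤ ν` and `-f'(u) u ≤ ν`.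
The second keeps `f''` above `f''(r) / 4` on the Dikin interval `[r, r + f''(r)^{-1/2}]`, so `f'`
grows there by at least `√f''(r) / 4`; against the gradient bounds this gives
`√f''(r) ≤ (2 + 6ν) (1 / r + 1 / (1 - r))`. Integrating over `[s, t]`, the parameters of `x` and
`y`, bounds the length of the segment `[x, y]` by `(2 + 6ν) log (t (1 - s) / (s (1 - t)))`, and
`t (1 - s) / (s (1 - t)) = 1 + σ(x, y)`.
-/

open MeasureTheory Filter

/-- The local norm `‖h‖_x = (D²F(x)[h,h])^{1/2}` induced by the Hessian of `F` at `x`. -/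
noncomputable def localNorm {d : ℕ} (F : EuclideanSpace ℝ (Fin d) → ℝ)
    (x h : EuclideanSpace ℝ (Fin d)) : ℝ :=
  Real.sqrt (iteratedFDeriv ℝ 2 F x ![h, h])

/-- The Riemannian length `∫₀¹ ‖γ'(t)‖_{γ(t)} dt` of a path `γ`. -/
noncomputable def pathLength {d : ℕ} (F : EuclideanSpace ℝ (Fin d) → ℝ)
    (γ : ℝ → EuclideanSpace ℝ (Fin d)) : ℝ :=
  ∫ t in Set.Icc (0 : ℝ) 1, localNorm F (γ t) (deriv γ t)

/-- The Riemannian distance `ρ(x, y)` on `K` induced by the Hessian metric of `F`: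
the infimum of the lengths of continuously differentiable paths in `K` from `x` to `y`
lying in the interior of `K` except possibly at the endpoints. -/
noncomputable def riemannDist {d : ℕ} (F : EuclideanSpace ℝ (Fin d) → ℝ)
    (K : Set (EuclideanSpace ℝ (Fin d))) (x y : EuclideanSpace ℝ (Fin d)) : ℝ :=
  sInf { L : ℝ | ∃ γ : ℝ → EuclideanSpace ℝ (Fin d),
    ContDiffOn ℝ 1 γ (Set.Icc 0 1) ∧ γ 0 = x ∧ γ 1 = y ∧
    (∀ t ∈ Set.Icc (0 : ℝ) 1, γ t ∈ K) ∧
    (∀ t ∈ Set.Ioo (0 : ℝ) 1, γ t ∈ interior K) ∧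
    L = pathLength F γ }

open Set Topology

theorem image_sub_le_mul_sub_of_hasDerivAt_le {f f' : ℝ → ℝ} {a b C : ℝ} (hab : a ≤ b)
    (hf : ∀ x ∈ Icc a b, HasDerivAt f (f' x) x) (hf' : ∀ x ∈ Ioo a b, f' x ≤ C) :
    f b - f a ≤ C * (b - a) := by
  rcases hab.eq_or_lt with rfl | hlt
  · simp
  obtain ⟨c, hc, hslope⟩ := exists_hasDerivAt_eq_slope f f' hlt
    (fun x hx => (hf x hx).continuousAt.continuousWithinAt)
    (fun x hx => hf x (Ioo_subset_Icc_self hx))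
  rw [← div_le_iff₀ (sub_pos.2 hlt), ← hslope]
  exact hf' c hc

theorem mul_sub_le_image_sub_of_le_hasDerivAt {f f' : ℝ → ℝ} {a b C : ℝ} (hab : a ≤ b)
    (hf : ∀ x ∈ Icc a b, HasDerivAt f (f' x) x) (hf' : ∀ x ∈ Ioo a b, C ≤ f' x) :
    C * (b - a) ≤ f b - f a := by
  have := image_sub_le_mul_sub_of_hasDerivAt_le (f := fun x => -f x) hab
    (fun x hx => (hf x hx).neg) (fun x hx => neg_le_neg (hf' x hx))
  linarith

section UnitInterval

variable {ν : ℝ} {g₁ g₂ g₃ : ℝ → ℝ}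

theorem sub_div_le_inv_sub_inv (hν : 0 < ν) {a b : ℝ} (hab : a ≤ b)
    (hd : ∀ x ∈ Icc a b, HasDerivAt g₁ (g₂ x) x) (hsq : ∀ x ∈ Icc a b, g₁ x ^ 2 ≤ ν * g₂ x)
    (hne : ∀ x ∈ Icc a b, g₁ x ≠ 0) :
    (b - a) / ν ≤ (g₁ a)⁻¹ - (g₁ b)⁻¹ := by
  have := image_sub_le_mul_sub_of_hasDerivAt_le (f := fun x => (g₁ x)⁻¹) (C := -ν⁻¹) hab
    (fun x hx => (hd x hx).inv (hne x hx)) fun x hx => by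
      have hx' := Ioo_subset_Icc_self hx
      rw [neg_div, neg_le_neg_iff, le_div_iff₀ (sq_pos_of_ne_zero (hne x hx')),
        inv_mul_le_iff₀ hν]
      exact hsq x hx'
  rw [div_eq_inv_mul]
  linarith

theorem mul_one_sub_le_of_sq_le_mul_deriv (hν : 0 < ν)
    (hd : ∀ x ∈ Ioo (0 : ℝ) 1, HasDerivAt g₁ (g₂ x) x)
    (hsq : ∀ x ∈ Ioo (0 : ℝ) 1, g₁ x ^ 2 ≤ ν * g₂ x) {u : ℝ} (hu : u ∈ Ioo (0 : ℝ) 1) :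
    g₁ u * (1 - u) ≤ ν := by
  rcases le_or_gt (g₁ u) 0 with hneg | hpos
  · nlinarith [hu.2]
  have hmono : MonotoneOn g₁ (Ioo 0 1) := by
    refine monotoneOn_of_hasDerivWithinAt_nonneg (f' := g₂) (convex_Ioo 0 1)
      (fun x hx => (hd x hx).continuousAt.continuousWithinAt) (fun x hx => ?_) fun x hx => ?_
    · rw [interior_Ioo] at hx
      exact (hd x hx).hasDerivWithinAt
    · rw [interior_Ioo] at hx
      nlinarith [hsq x hx, sq_nonneg (g₁ x)]
  have hbefore_one : ∀ v ∈ Ioo u 1, g₁ u * (v - u) ≤ ν := by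
    intro v hv
    have hsub : Icc u v ⊆ Ioo 0 1 := Icc_subset_Ioo hu.1 hv.2
    have hpos' : ∀ x ∈ Icc u v, 0 < g₁ x := fun x hx =>
      hpos.trans_le (hmono hu (hsub hx) hx.1)
    have hinv := sub_div_le_inv_sub_inv hν hv.1.le (fun x hx => hd x (hsub hx))
      (fun x hx => hsq x (hsub hx)) fun x hx => (hpos' x hx).ne'
    have : (v - u) / ν ≤ (g₁ u)⁻¹ := by
      linarith [inv_pos.2 (hpos' v (right_mem_Icc.2 hv.1.le))]
    rwa [div_le_iff₀ hν, ← div_eq_inv_mul, le_div_iff₀ hpos, mul_comm] at this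
  have hlim : Tendsto (fun v => g₁ u * (v - u)) (𝓝[<] 1) (𝓝 (g₁ u * (1 - u))) :=
    ((continuous_const.mul (continuous_id.sub continuous_const)).tendsto 1).mono_left
      nhdsWithin_le_nhds
  exact le_of_tendsto hlim (eventually_of_mem (Ioo_mem_nhdsLT hu.2) hbefore_one)

theorem neg_mul_le_of_sq_le_mul_deriv (hν : 0 < ν)
    (hd : ∀ x ∈ Ioo (0 : ℝ) 1, HasDerivAt g₁ (g₂ x) x)
    (hsq : ∀ x ∈ Ioo (0 : ℝ) 1, g₁ x ^ 2 ≤ ν * g₂ x) {u : ℝ} (hu : u ∈ Ioo (0 : ℝ) 1) :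
    -g₁ u * u ≤ ν := by
  have hmem : ∀ x ∈ Ioo (0 : ℝ) 1, 1 - x ∈ Ioo (0 : ℝ) 1 := fun x hx =>
    ⟨by linarith [hx.2], by linarith [hx.1]⟩
  have hrefl := mul_one_sub_le_of_sq_le_mul_deriv (g₁ := fun x => -g₁ (1 - x))
    (g₂ := fun x => g₂ (1 - x)) hν
    (fun x hx => by
      simpa [Function.comp_def] using
        ((hd (1 - x) (hmem x hx)).comp x ((hasDerivAt_id x).const_sub 1)).fun_neg)
    (fun x hx => by simpa using hsq (1 - x) (hmem x hx)) (hmem u hu)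
  simpa using hrefl

theorem div_one_add_sqrt_mul_sq_le {z z' : ℝ → ℝ} {a b : ℝ}
    (hd : ∀ x ∈ Icc a b, HasDerivAt z (z' x) x) (hz : ∀ x ∈ Icc a b, 0 ≤ z x)
    (hsc : ∀ x ∈ Icc a b, -z' x ≤ 2 * z x ^ ((3 : ℝ) / 2)) {τ : ℝ} (hτ : τ ∈ Icc a b) :
    z a / (1 + √(z a) * (τ - a)) ^ 2 ≤ z τ := by
  have ha : a ∈ Icc a b := left_mem_Icc.2 (hτ.1.trans hτ.2)
  rcases (hz a ha).eq_or_lt with hza | hza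
  · rw [← hza, zero_div]; exact hz τ hτ
  set w := √(z a)
  have hw : 0 < w := Real.sqrt_pos.2 hza
  have hD : 0 < 1 + w * (τ - a) := by nlinarith [hτ.1]
  refine le_of_forall_pos_le_add fun ε hε => ?_
  have hsub : Icc a τ ⊆ Icc a b := Icc_subset_Icc_right hτ.2
  have hS : ∀ x ∈ Icc a b, 0 < √(z x + ε) := fun x hx =>
    Real.sqrt_pos.2 (by linarith [hz x hx])
  -- regularising by `ε` keeps `(z + ε)^(-1/2)` differentiable where `z` vanishes
  have hslope := image_sub_le_mul_sub_of_hasDerivAt_le (f := fun x => (√(z x + ε))⁻¹) (C := 1)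
    hτ.1 (fun x hx => (((hd x (hsub hx)).add_const ε).sqrt
      (by linarith [hz x (hsub hx)])).inv (hS x (hsub hx)).ne') fun x hx => by
    have hx' := hsub (Ioo_subset_Icc_self hx)
    have hzε : 0 ≤ z x + ε := by linarith [hz x hx']
    have hS3 : 0 < 2 * √(z x + ε) * √(z x + ε) ^ 2 := by have := hS x hx'; positivity
    have hsc' : -z' x ≤ 2 * √(z x + ε) * √(z x + ε) ^ 2 := by
      have := hz x hx'
      calc -z' x ≤ 2 * z x ^ ((3 : ℝ) / 2) := hsc x hx'
        _ ≤ 2 * (z x + ε) ^ ((3 : ℝ) / 2) := by gcongr; linarith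
        _ = 2 * √(z x + ε) * √(z x + ε) ^ 2 := by
          rw [Real.sq_sqrt hzε, show (3 : ℝ) / 2 = 1 + 1 / 2 by norm_num,
            Real.rpow_add' hzε (by norm_num), Real.rpow_one, ← Real.sqrt_eq_rpow]
          ring
    rw [neg_div, div_div, ← neg_div, div_le_one hS3]
    exact hsc'
  have hwa : (√(z a + ε))⁻¹ ≤ w⁻¹ :=
    inv_anti₀ hw (Real.sqrt_le_sqrt (by linarith))
  have hroot : w / (1 + w * (τ - a)) ≤ √(z τ + ε) := by
    rw [← inv_le_inv₀ (hS τ hτ) (div_pos hw hD), inv_div, add_div,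
      mul_div_cancel_left₀ _ hw.ne', one_div]
    linarith
  calc z a / (1 + w * (τ - a)) ^ 2 = (w / (1 + w * (τ - a))) ^ 2 := by
        rw [div_pow, Real.sq_sqrt hza.le]
    _ ≤ √(z τ + ε) ^ 2 := by gcongr
    _ = z τ + ε := Real.sq_sqrt (by linarith [hz τ hτ])

theorem sqrt_hessian_le_of_selfConcordant (hν : 1 ≤ ν)
    (hd₁ : ∀ x ∈ Ioo (0 : ℝ) 1, HasDerivAt g₁ (g₂ x) x)
    (hd₂ : ∀ x ∈ Ioo (0 : ℝ) 1, HasDerivAt g₂ (g₃ x) x)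
    (hsq : ∀ x ∈ Ioo (0 : ℝ) 1, g₁ x ^ 2 ≤ ν * g₂ x)
    (hsc : ∀ x ∈ Ioo (0 : ℝ) 1, -g₃ x ≤ 2 * g₂ x ^ ((3 : ℝ) / 2)) {r : ℝ}
    (hr : r ∈ Ioo (0 : ℝ) 1) :
    √(g₂ r) ≤ (2 + 6 * ν) * (r⁻¹ + (1 - r)⁻¹) := by
  have hν₀ : 0 < ν := by linarith
  have hr₁ : 0 < 1 - r := by linarith [hr.2]
  have hinv₀ : 0 < r⁻¹ := inv_pos.2 hr.1
  have hinv₁ : 0 < (1 - r)⁻¹ := inv_pos.2 hr₁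
  have hg₂ : ∀ x ∈ Ioo (0 : ℝ) 1, 0 ≤ g₂ x := fun x hx => by
    nlinarith [hsq x hx, sq_nonneg (g₁ x)]
  set w := √(g₂ r)
  -- above this threshold the Dikin interval `[r, r + 1 / w]` fits in the first third of `[r, 1]`
  rcases le_or_gt w (3 * (1 - r)⁻¹) with hsmall | hlarge
  · nlinarith
  have hw : 0 < w := lt_trans (by positivity) hlarge
  set e := w⁻¹
  have he : e < (1 - r) / 3 := by
    have := inv_strictAnti₀ (by positivity) hlarge
    rwa [mul_inv, inv_inv, ← div_eq_inv_mul] at this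
  have hsub : Icc r (r + e) ⊆ Ioo 0 1 := Icc_subset_Ioo hr.1 (by linarith [inv_pos.2 hw])
  have hlow : ∀ x ∈ Ioo r (r + e), w ^ 2 / 4 ≤ g₂ x := fun x hx => by
    refine le_trans ?_ (div_one_add_sqrt_mul_sq_le (fun y hy => hd₂ y (hsub hy))
      (fun y hy => hg₂ y (hsub hy)) (fun y hy => hsc y (hsub hy)) (Ioo_subset_Icc_self hx))
    have hstep : w * (x - r) ≤ 1 := by
      calc w * (x - r) ≤ w * e := by gcongr; linarith [hx.2]
        _ = 1 := mul_inv_cancel₀ hw.ne'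
    change w ^ 2 / 4 ≤ g₂ r / (1 + w * (x - r)) ^ 2
    rw [← Real.sq_sqrt (hg₂ r hr)]
    gcongr
    · nlinarith [hx.1]
    · nlinarith [mul_pos hw (sub_pos.2 hx.1)]
  have hgain := mul_sub_le_image_sub_of_le_hasDerivAt (by linarith [inv_pos.2 hw])
    (fun x hx => hd₁ x (hsub hx)) hlow
  have hwe : w ^ 2 / 4 * (r + e - r) = w / 4 := by
    rw [add_sub_cancel_left]
    field_simp
    exact mul_inv_cancel₀ hw.ne'
  have hright : g₁ (r + e) ≤ 3 / 2 * ν * (1 - r)⁻¹ := by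
    have hre : 0 < 1 - (r + e) := by linarith [inv_pos.2 hw]
    calc g₁ (r + e) ≤ ν / (1 - (r + e)) := by
          rw [le_div_iff₀ hre]
          exact mul_one_sub_le_of_sq_le_mul_deriv hν₀ hd₁ hsq
            (hsub (right_mem_Icc.2 (by linarith [inv_pos.2 hw])))
      _ ≤ ν / (2 / 3 * (1 - r)) := by gcongr; linarith
      _ = 3 / 2 * ν * (1 - r)⁻¹ := by field_simp
  have hleft : -g₁ r ≤ ν * r⁻¹ := by
    rw [← div_eq_mul_inv, le_div_iff₀ hr.1]
    exact neg_mul_le_of_sq_le_mul_deriv hν₀ hd₁ hsq hr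
  nlinarith [mul_pos hν₀ hinv₀]

end UnitInterval

theorem intervalIntegral.integral_mono_of_nonneg_on {f g : ℝ → ℝ} {a b : ℝ} (hab : a ≤ b)
    (hf : ∀ x ∈ Ioc a b, 0 ≤ f x) (hg : IntervalIntegrable g volume a b)
    (hfg : ∀ x ∈ Ioc a b, f x ≤ g x) : ∫ x in a..b, f x ≤ ∫ x in a..b, g x := by
  rw [intervalIntegral.integral_of_le hab, intervalIntegral.integral_of_le hab]
  exact integral_mono_of_nonneg ((ae_restrict_iff' measurableSet_Ioc).2
    (.of_forall hf)) hg.1 ((ae_restrict_iff' measurableSet_Ioc).2 (.of_forall hfg))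

theorem intervalIntegrable_inv_add_inv_one_sub {s t : ℝ} (hs : s ∈ Ioo (0 : ℝ) 1)
    (ht : t ∈ Ioo (0 : ℝ) 1) :
    IntervalIntegrable (fun v => v⁻¹ + (1 - v)⁻¹) volume s t := by
  have hI := ordConnected_Ioo.uIcc_subset hs ht
  exact (intervalIntegral.intervalIntegrable_inv (fun v hv => (hI hv).1.ne')
    continuousOn_id).add (intervalIntegral.intervalIntegrable_inv
      (fun v hv => (sub_pos.2 (hI hv).2).ne') (continuousOn_const.sub continuousOn_id))

theorem integral_inv_add_inv_one_sub {s t : ℝ} (hs : s ∈ Ioo (0 : ℝ) 1)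
    (ht : t ∈ Ioo (0 : ℝ) 1) :
    ∫ v in s..t, (v⁻¹ + (1 - v)⁻¹) = Real.log (1 + (t - s) / (s * (1 - t))) := by
  have hI := ordConnected_Ioo.uIcc_subset hs ht
  rw [intervalIntegral.integral_eq_sub_of_hasDerivAt
    (f := fun v => Real.log v - Real.log (1 - v)) (fun v hv => ?_)
    (intervalIntegrable_inv_add_inv_one_sub hs ht)]
  · have hs₀ : s ≠ 0 := hs.1.ne'
    have hs₁ : 0 < 1 - s := sub_pos.2 hs.2
    have ht₁ : 0 < 1 - t := sub_pos.2 ht.2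
    rw [show 1 + (t - s) / (s * (1 - t)) = t * (1 - s) / (s * (1 - t)) by field_simp; ring,
      Real.log_div (by positivity [ht.1]) (by positivity [hs.1]), Real.log_mul ht.1.ne' hs₁.ne',
      Real.log_mul hs.1.ne' ht₁.ne']
    ring
  · exact ((Real.hasDerivAt_log (hI hv).1.ne').fun_sub
      ((Real.hasDerivAt_log (sub_pos.2 (hI hv).2).ne').comp v ((hasDerivAt_id v).const_sub 1))
      ).congr_deriv (by ring)

section Chord

variable {E G : Type*} [NormedAddCommGroup E] [NormedSpace ℝ E] [NormedAddCommGroup G]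
  [NormedSpace ℝ G]

theorem iteratedFDeriv_apply_const_smul (F : E → G) (z h : E) (c : ℝ) (n : ℕ) :
    (iteratedFDeriv ℝ n F z fun _ => c • h) = c ^ n • iteratedFDeriv ℝ n F z fun _ => h := by
  simpa using (iteratedFDeriv ℝ n F z).map_smul_univ (fun _ => c) fun _ => h

theorem hasDerivAt_iteratedFDeriv_add_smul {F : E → G} {n : WithTop ℕ∞} {m : ℕ} {p h : E}
    {u : ℝ} (hF : ContDiffAt ℝ n F (p + u • h)) (hm : (m : WithTop ℕ∞) < n) :
    HasDerivAt (fun v : ℝ => iteratedFDeriv ℝ m F (p + v • h) fun _ => h)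
      (iteratedFDeriv ℝ (m + 1) F (p + u • h) fun _ => h) u := by
  have hline : HasDerivAt (fun v : ℝ => p + v • h) h u := by
    simpa using ((hasDerivAt_id u).smul_const h).const_add p
  have hcomp := (ContinuousMultilinearMap.apply ℝ (fun _ : Fin m => E) G fun _ => h
    ).hasFDerivAt.comp_hasDerivAt u
      ((hF.differentiableAt_iteratedFDeriv hm).hasFDerivAt.comp_hasDerivAt u hline)
  exact hcomp.congr_deriv (by rw [iteratedFDeriv_succ_apply_left]; rfl)

theorem Convex.add_smul_sub_mem_interior_of_mem_closure {K : Set E} (hK : Convex ℝ K)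
    {p q : E} (hp : p ∈ closure K) (hq : q ∈ closure K) {s u : ℝ} (hs : s ∈ Ioo (0 : ℝ) 1)
    (hx : p + s • (q - p) ∈ interior K) (hu : u ∈ Ioo (0 : ℝ) 1) :
    p + u • (q - p) ∈ interior K := by
  rcases le_or_gt u s with hus | hsu
  · simpa [smul_smul, div_mul_cancel₀ _ hs.1.ne'] using
      hK.add_smul_mem_interior' hp hx ⟨div_pos hu.1 hs.1, (div_le_one hs.1).2 hus⟩
  · have hs₁ : 0 < 1 - s := by linarith [hs.2]
    have hx' : q + (1 - s) • (p - q) ∈ interior K := by convert hx using 1; module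
    convert hK.add_smul_mem_interior' hq hx' (t := (1 - u) / (1 - s))
      ⟨div_pos (by linarith [hu.2]) hs₁, (div_le_one hs₁).2 (by linarith)⟩ using 1
    rw [smul_smul, div_mul_cancel₀ _ hs₁.ne']
    module

end Chord

noncomputable def crossRatio {E : Type*} [NormedAddCommGroup E] (p x y q : E) : ℝ :=
  ‖x - y‖ * ‖p - q‖ / (‖p - x‖ * ‖q - y‖)

theorem crossRatio_add_smul_sub {E : Type*} [NormedAddCommGroup E] [NormedSpace ℝ E]
    {p q : E} (hpq : p ≠ q) {s t : ℝ} (hs : 0 < s) (hst : s ≤ t) (ht : t < 1) :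
    crossRatio p (p + s • (q - p)) (p + t • (q - p)) q = (t - s) / (s * (1 - t)) := by
  have hn : 0 < ‖q - p‖ := norm_pos_iff.2 (sub_ne_zero.2 hpq.symm)
  have h₁ : p + s • (q - p) - (p + t • (q - p)) = (s - t) • (q - p) := by module
  have h₂ : p - (p + s • (q - p)) = (-s) • (q - p) := by module
  have h₃ : q - (p + t • (q - p)) = (1 - t) • (q - p) := by module
  rw [crossRatio, h₁, h₂, h₃, norm_sub_rev p q, norm_smul, norm_smul, norm_smul,
    Real.norm_eq_abs, Real.norm_eq_abs, Real.norm_eq_abs, abs_of_nonpos (by linarith), abs_neg,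
    abs_of_pos hs, abs_of_pos (by linarith)]
  field_simp
  ring

section HessianMetric

variable {d : ℕ} {F : EuclideanSpace ℝ (Fin d) → ℝ}

theorem localNorm_eq_sqrt (z h : EuclideanSpace ℝ (Fin d)) :
    localNorm F z h = √(iteratedFDeriv ℝ 2 F z fun _ => h) := by
  simp only [localNorm, Matrix.vec_single_eq_const, Matrix.vecCons_const]

theorem localNorm_smul (z h : EuclideanSpace ℝ (Fin d)) (c : ℝ) :
    localNorm F z (c • h) = |c| * localNorm F z h := by
  rw [localNorm_eq_sqrt, localNorm_eq_sqrt, iteratedFDeriv_apply_const_smul, smul_eq_mul,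
    Real.sqrt_mul (sq_nonneg c), Real.sqrt_sq_eq_abs]

theorem riemannDist_le_pathLength {K : Set (EuclideanSpace ℝ (Fin d))}
    {γ : ℝ → EuclideanSpace ℝ (Fin d)} (hγ : ContDiffOn ℝ 1 γ (Icc 0 1))
    (hK : ∀ t ∈ Icc (0 : ℝ) 1, γ t ∈ K) (hint : ∀ t ∈ Ioo (0 : ℝ) 1, γ t ∈ interior K) :
    riemannDist F K (γ 0) (γ 1) ≤ pathLength F γ := by
  refine csInf_le ⟨0, ?_⟩ ⟨γ, hγ, rfl, rfl, hK, hint, rfl⟩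
  rintro _ ⟨γ', -, -, -, -, -, rfl⟩
  exact integral_nonneg fun _ => Real.sqrt_nonneg _

theorem pathLength_add_affine_smul (p h : EuclideanSpace ℝ (Fin d)) {a : ℝ} (ha : 0 < a)
    (b : ℝ) :
    pathLength F (fun u => p + (a * u + b) • h) =
      ∫ v in b..a + b, localNorm F (p + v • h) h := by
  have hderiv : ∀ u : ℝ, deriv (fun u => p + (a * u + b) • h) u = a • h := fun u => by
    simpa using ((((hasDerivAt_id u).const_mul a).add_const b).smul_const h).const_add p |>.deriv
  simp only [pathLength, hderiv, localNorm_smul, abs_of_pos ha]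
  rw [integral_Icc_eq_integral_Ioc, ← intervalIntegral.integral_of_le zero_le_one,
    intervalIntegral.integral_const_mul,
    intervalIntegral.integral_comp_mul_add (fun v => localNorm F (p + v • h) h) ha.ne',
    smul_eq_mul, ← mul_assoc, mul_inv_cancel₀ ha.ne', one_mul, mul_zero, zero_add, mul_one]

theorem localNorm_le_of_selfConcordant {U : Set (EuclideanSpace ℝ (Fin d))} (hU : IsOpen U)
    {ν : ℝ} (hν : 1 ≤ ν)
    (hFsmooth : ContDiffOn ℝ 3 F U)
    (hFsc : ∀ x ∈ U, ∀ h : EuclideanSpace ℝ (Fin d),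
      iteratedFDeriv ℝ 3 F x ![h, h, h] ≤
        2 * (iteratedFDeriv ℝ 2 F x ![h, h]) ^ ((3 : ℝ) / 2))
    (hFν : ∀ x ∈ U, ∀ h : EuclideanSpace ℝ (Fin d),
      (fderiv ℝ F x h) ^ 2 ≤ ν * iteratedFDeriv ℝ 2 F x ![h, h])
    {p h : EuclideanSpace ℝ (Fin d)} (hchord : ∀ u ∈ Ioo (0 : ℝ) 1, p + u • h ∈ U) {u : ℝ}
    (hu : u ∈ Ioo (0 : ℝ) 1) :
    localNorm F (p + u • h) h ≤ (2 + 6 * ν) * (u⁻¹ + (1 - u)⁻¹) := by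
  set g : ℕ → ℝ → ℝ := fun m v => iteratedFDeriv ℝ m F (p + v • h) fun _ => h
  have hd : ∀ m < 3, ∀ v ∈ Ioo (0 : ℝ) 1, HasDerivAt (g m) (g (m + 1) v) v := fun m hm v hv =>
    hasDerivAt_iteratedFDeriv_add_smul (hFsmooth.contDiffAt (hU.mem_nhds (hchord v hv)))
      (by exact_mod_cast hm)
  have hsq : ∀ v ∈ Ioo (0 : ℝ) 1, g 1 v ^ 2 ≤ ν * g 2 v := fun v hv => by
    simpa only [g, iteratedFDeriv_one_apply, Matrix.vec_single_eq_const, Matrix.vecCons_const]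
      using hFν _ (hchord v hv) h
  have hsc : ∀ v ∈ Ioo (0 : ℝ) 1, -g 3 v ≤ 2 * g 2 v ^ ((3 : ℝ) / 2) := fun v hv => by
    have := hFsc _ (hchord v hv) ((-1 : ℝ) • h)
    simp only [Matrix.vec_single_eq_const, Matrix.vecCons_const, iteratedFDeriv_apply_const_smul]
      at this
    norm_num at this
    exact this
  rw [localNorm_eq_sqrt]
  exact sqrt_hessian_le_of_selfConcordant hν (hd 1 (by norm_num)) (hd 2 (by norm_num))
    hsq hsc hu

theorem riemannDist_add_smul_le_log {K : Set (EuclideanSpace ℝ (Fin d))} {ν : ℝ} (hν : 1 ≤ ν)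
    (hFsmooth : ContDiffOn ℝ 3 F (interior K))
    (hFsc : ∀ x ∈ interior K, ∀ h : EuclideanSpace ℝ (Fin d),
      iteratedFDeriv ℝ 3 F x ![h, h, h] ≤
        2 * (iteratedFDeriv ℝ 2 F x ![h, h]) ^ ((3 : ℝ) / 2))
    (hFν : ∀ x ∈ interior K, ∀ h : EuclideanSpace ℝ (Fin d),
      (fderiv ℝ F x h) ^ 2 ≤ ν * iteratedFDeriv ℝ 2 F x ![h, h])
    {p h : EuclideanSpace ℝ (Fin d)} (hchord : ∀ u ∈ Ioo (0 : ℝ) 1, p + u • h ∈ interior K)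
    {s t : ℝ} (hs : 0 < s) (hst : s < t) (ht : t < 1) :
    riemannDist F K (p + s • h) (p + t • h) ≤
      2 * (1 + 3 * ν) * Real.log (1 + (t - s) / (s * (1 - t))) := by
  have hsI : s ∈ Ioo (0 : ℝ) 1 := ⟨hs, hst.trans ht⟩
  have htI : t ∈ Ioo (0 : ℝ) 1 := ⟨hs.trans hst, ht⟩
  set γ := fun u : ℝ => p + ((t - s) * u + s) • h
  have hγ : ∀ u ∈ Icc (0 : ℝ) 1, γ u ∈ interior K := fun u hu =>
    hchord _ ⟨by nlinarith [hu.1], by nlinarith [hu.2]⟩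
  calc riemannDist F K (p + s • h) (p + t • h) = riemannDist F K (γ 0) (γ 1) := by simp [γ]
    _ ≤ pathLength F γ := riemannDist_le_pathLength (by fun_prop)
        (fun u hu => interior_subset (hγ u hu)) fun u hu => hγ u (Ioo_subset_Icc_self hu)
    _ = ∫ v in s..t, localNorm F (p + v • h) h := by
        rw [pathLength_add_affine_smul _ _ (sub_pos.2 hst), sub_add_cancel]
    _ ≤ ∫ v in s..t, (2 + 6 * ν) * (v⁻¹ + (1 - v)⁻¹) :=
        intervalIntegral.integral_mono_of_nonneg_on hst.le (fun _ _ => Real.sqrt_nonneg _)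
          ((intervalIntegrable_inv_add_inv_one_sub hsI htI).const_mul _) fun v hv =>
          localNorm_le_of_selfConcordant isOpen_interior hν hFsmooth hFsc hFν hchord
            ⟨hs.trans hv.1, hv.2.trans_lt ht⟩
    _ = 2 * (1 + 3 * ν) * Real.log (1 + (t - s) / (s * (1 - t))) := by
        rw [intervalIntegral.integral_const_mul, integral_inv_add_inv_one_sub hsI htI]
        ring

end HessianMetric

theorem riemann_dist_le_hilbert_metric_general
    {d : ℕ} (K : Set (EuclideanSpace ℝ (Fin d)))
    (hKconv : Convex ℝ K)
    (F : EuclideanSpace ℝ (Fin d) → ℝ) (ν : ℝ) (hν : 1 ≤ ν)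
    (hFsmooth : ContDiffOn ℝ 3 F (interior K))
    (hFsc : ∀ x ∈ interior K, ∀ h : EuclideanSpace ℝ (Fin d),
      iteratedFDeriv ℝ 3 F x ![h, h, h] ≤
        2 * (iteratedFDeriv ℝ 2 F x ![h, h]) ^ ((3 : ℝ) / 2))
    (hFν : ∀ x ∈ interior K, ∀ h : EuclideanSpace ℝ (Fin d),
      (fderiv ℝ F x h) ^ 2 ≤ ν * iteratedFDeriv ℝ 2 F x ![h, h])
    (x y : EuclideanSpace ℝ (Fin d))
    (hx : x ∈ interior K)
    (p q : EuclideanSpace ℝ (Fin d))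
    (hp : p ∈ frontier K) (hq : q ∈ frontier K)
    (s t : ℝ) (hs : 0 < s) (hst : s < t) (ht : t < 1)
    (hxs : x = p + s • (q - p)) (hyt : y = p + t • (q - p)) :
    riemannDist F K x y ≤
      2 * (1 + 3 * ν) *
        Real.log (1 + ‖x - y‖ * ‖p - q‖ / (‖p - x‖ * ‖q - y‖)) ∧
    riemannDist F K x y ≤
      2 * (1 + 3 * ν) * (‖x - y‖ * ‖p - q‖ / (‖p - x‖ * ‖q - y‖)) := by
  subst hxs hyt
  have hpq : p ≠ q := by
    rintro rfl
    exact hp.2 (by simpa using hx)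
  have hρ := riemannDist_add_smul_le_log hν hFsmooth hFsc hFν
    (fun u hu => hKconv.add_smul_sub_mem_interior_of_mem_closure hp.1 hq.1 ⟨hs, hst.trans ht⟩ hx hu)
    hs hst ht
  have hσ := crossRatio_add_smul_sub hpq hs hst.le ht
  have hσ₀ : 0 ≤ (t - s) / (s * (1 - t)) := div_nonneg (by linarith) (by nlinarith)
  rw [crossRatio] at hσ
  rw [hσ]
  refine ⟨hρ, hρ.trans ?_⟩
  gcongr
  linarith [Real.log_le_sub_one_of_pos (by linarith : 0 < 1 + (t - s) / (s * (1 - t)))]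

/-- for distinct `x, y ∈ int K`, with `p, q` the endpoints on the boundary of
`K` of the chord of `K` through `x` and `y` ordered so that `p, x, y, q` appear in that
order, the Riemannian distance induced by a `ν`-self-concordant barrier is bounded by the
Hilbert metric: `ρ(x, y) ≤ 2(1 + 3ν)·ln(1 + σ(x, y))`, where
`σ(x, y) = (|x − y|·|p − q|)/(|p − x|·|q − y|)`; in particular
`ρ(x, y) ≤ 2(1 + 3ν)·σ(x, y)`. -/
theorem riemann_dist_le_hilbert_metric
    {d : ℕ} (K : Set (EuclideanSpace ℝ (Fin d)))
    (hKcomp : IsCompact K) (hKconv : Convex ℝ K) (hKint : (interior K).Nonempty)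
    (F : EuclideanSpace ℝ (Fin d) → ℝ) (ν : ℝ) (hν : 1 ≤ ν)
    (hFsmooth : ContDiffOn ℝ 3 F (interior K))
    (hFconv : ConvexOn ℝ (interior K) F)
    (hFbarrier : ∀ x ∉ interior K, ∀ u : ℕ → EuclideanSpace ℝ (Fin d),
      (∀ n, u n ∈ interior K) → Tendsto u atTop (nhds x) →
        Tendsto (fun n => F (u n)) atTop atTop)
    (hFsc : ∀ x ∈ interior K, ∀ h : EuclideanSpace ℝ (Fin d),
      iteratedFDeriv ℝ 3 F x ![h, h, h] ≤
        2 * (iteratedFDeriv ℝ 2 F x ![h, h]) ^ ((3 : ℝ) / 2))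
    (hFν : ∀ x ∈ interior K, ∀ h : EuclideanSpace ℝ (Fin d),
      (fderiv ℝ F x h) ^ 2 ≤ ν * iteratedFDeriv ℝ 2 F x ![h, h])
    (x y : EuclideanSpace ℝ (Fin d))
    (hx : x ∈ interior K) (hy : y ∈ interior K) (hxy : x ≠ y)
    (p q : EuclideanSpace ℝ (Fin d))
    (hp : p ∈ frontier K) (hq : q ∈ frontier K)
    (s t : ℝ) (hs : 0 < s) (hst : s < t) (ht : t < 1)
    (hxs : x = p + s • (q - p)) (hyt : y = p + t • (q - p)) :
    riemannDist F K x y ≤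
      2 * (1 + 3 * ν) *
        Real.log (1 + ‖x - y‖ * ‖p - q‖ / (‖p - x‖ * ‖q - y‖)) ∧
    riemannDist F K x y ≤
      2 * (1 + 3 * ν) * (‖x - y‖ * ‖p - q‖ / (‖p - x‖ * ‖q - y‖)) :=
  riemann_dist_le_hilbert_metric_general K hKconv F ν hν hFsmooth hFsc hFν x y hx p q hp hq s t hs
    hst ht hxs hyt
end

section
/- Let μ and μ' be mutually absolutely continuous probability measures on K, and let β ≥ 1 be such that dμ/dμ' ≤ β and dμ'/dμ ≤ β almost everywhere. Let σ be a probability measure on K with σ ≪ μ and dσ/dμ ∈ L²(μ). Then ‖dσ/dμ' − 1‖_{L²(μ')} ≤ β^{3/2} · ‖dσ/dμ − 1‖_{L²(μ)} + √β · (β − 1). -/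
/-!
By the chain rule `dσ/dμ' = f g` with `f = dσ/dμ` and `g = dμ/dμ'`, so
`dσ/dμ' - 1 = (f - 1) g + (g - 1)` and Minkowski's inequality in `L²(μ')` splits the error.
Since `g ≤ β`, `∫ (f - 1)² g² dμ' ≤ β ∫ (f - 1)² g dμ' = β ∫ (f - 1)² dμ`; since also
`dμ'/dμ = 1/g ≤ β`, the density `g` lies in `[1/β, β]` and `|g - 1| ≤ β - 1`. This gives the
sharper bound `√β ‖f - 1‖_{L²(μ)} + (β - 1)`.
-/

open MeasureTheory

namespace MeasureTheory

variable {α : Type*} [MeasurableSpace α] {μ ν : Measure α}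

theorem MemLp.sqrt_integral_sq_eq {f : α → ℝ} (hf : MemLp f 2 μ) :
    √(∫ x, f x ^ 2 ∂μ) = (eLpNorm f 2 μ).toReal := by
  rw [hf.eLpNorm_eq_integral_rpow_norm two_ne_zero ENNReal.ofNat_ne_top,
    ENNReal.toReal_ofReal (by positivity), Real.sqrt_eq_rpow]
  norm_num

theorem sqrt_integral_add_sq_le {u v : α → ℝ} (hu : MemLp u 2 μ) (hv : MemLp v 2 μ) :
    √(∫ x, (u x + v x) ^ 2 ∂μ) ≤ √(∫ x, u x ^ 2 ∂μ) + √(∫ x, v x ^ 2 ∂μ) := by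
  have hsum := (hu.add hv).sqrt_integral_sq_eq
  simp only [Pi.add_apply] at hsum
  rw [hsum, hu.sqrt_integral_sq_eq, hv.sqrt_integral_sq_eq,
    ← ENNReal.toReal_add hu.eLpNorm_ne_top hv.eLpNorm_ne_top]
  exact ENNReal.toReal_mono (by finiteness)
    (eLpNorm_add_le hu.aestronglyMeasurable hv.aestronglyMeasurable one_le_two)

theorem sqrt_integral_sq_le_of_ae_abs_le [IsProbabilityMeasure μ] {v : α → ℝ} {c : ℝ}
    (hc : 0 ≤ c) (hv : ∀ᵐ x ∂μ, |v x| ≤ c) : √(∫ x, v x ^ 2 ∂μ) ≤ c := by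
  refine Real.sqrt_le_iff.mpr ⟨hc, ?_⟩
  calc ∫ x, v x ^ 2 ∂μ ≤ ∫ _, c ^ 2 ∂μ :=
        integral_mono_of_nonneg (.of_forall fun x ↦ sq_nonneg _) (integrable_const _)
          (hv.mono fun x hx ↦ sq_le_sq' (abs_le.mp hx).1 (abs_le.mp hx).2)
    _ = c ^ 2 := by simp

theorem ae_sq_mul_toReal_rnDeriv_le {β : ℝ} (hbd : ∀ᵐ x ∂ν, (μ.rnDeriv ν x).toReal ≤ β)
    (u : α → ℝ) :
    ∀ᵐ x ∂ν, (u x * (μ.rnDeriv ν x).toReal) ^ 2 ≤ β * ((μ.rnDeriv ν x).toReal * u x ^ 2) := by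
  filter_upwards [hbd] with x hx
  calc (u x * (μ.rnDeriv ν x).toReal) ^ 2
      = (μ.rnDeriv ν x).toReal * ((μ.rnDeriv ν x).toReal * u x ^ 2) := by ring
    _ ≤ β * ((μ.rnDeriv ν x).toReal * u x ^ 2) := by gcongr

theorem ae_abs_toReal_rnDeriv_sub_one_le [SigmaFinite μ] [SigmaFinite ν] (hνμ : ν ≪ μ) {β : ℝ}
    (hβ : 1 ≤ β) (hbd : ∀ᵐ x ∂ν, (μ.rnDeriv ν x).toReal ≤ β)
    (hbd' : ∀ᵐ x ∂ν, (ν.rnDeriv μ x).toReal ≤ β) :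
    ∀ᵐ x ∂ν, |(μ.rnDeriv ν x).toReal - 1| ≤ β - 1 := by
  filter_upwards [hbd, hbd', Measure.rnDeriv_mul_rnDeriv hνμ (κ := ν), Measure.rnDeriv_self ν]
    with x hle hle' hmul hone
  have hinv : (ν.rnDeriv μ x).toReal * (μ.rnDeriv ν x).toReal = 1 := by
    rw [← ENNReal.toReal_mul, ← Pi.mul_apply, hmul, hone, ENNReal.toReal_one]
  have hpos : 0 ≤ (μ.rnDeriv ν x).toReal := ENNReal.toReal_nonneg
  -- the lower bound `1 - g ≤ β - 1` comes from `g (2 - g) ≤ 1 = (dν/dμ) g ≤ β g`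
  rw [abs_le]
  constructor <;> nlinarith [sq_nonneg ((μ.rnDeriv ν x).toReal - 1)]

section LebesgueDecomposition

variable [μ.HaveLebesgueDecomposition ν] [SigmaFinite μ]

theorem memLp_two_mul_toReal_rnDeriv (hμν : μ ≪ ν) {β : ℝ}
    (hbd : ∀ᵐ x ∂ν, (μ.rnDeriv ν x).toReal ≤ β) {u : α → ℝ} (hu : Measurable u)
    (hu2 : Integrable (fun x ↦ u x ^ 2) μ) :
    MemLp (fun x ↦ u x * (μ.rnDeriv ν x).toReal) 2 ν := by
  have hmeas : Measurable fun x ↦ u x * (μ.rnDeriv ν x).toReal :=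
    hu.mul (Measure.measurable_rnDeriv μ ν).ennreal_toReal
  refine (memLp_two_iff_integrable_sq hmeas.aestronglyMeasurable).mpr ?_
  refine Integrable.mono' (((integrable_toReal_rnDeriv_mul_iff hμν).mpr hu2).const_mul β)
    (hmeas.pow_const 2).aestronglyMeasurable ?_
  filter_upwards [ae_sq_mul_toReal_rnDeriv_le hbd u] with x hx
  rwa [Real.norm_eq_abs, abs_of_nonneg (sq_nonneg _)]

theorem integral_sq_mul_toReal_rnDeriv_le (hμν : μ ≪ ν) {β : ℝ}
    (hbd : ∀ᵐ x ∂ν, (μ.rnDeriv ν x).toReal ≤ β) {u : α → ℝ}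
    (hu2 : Integrable (fun x ↦ u x ^ 2) μ) :
    ∫ x, (u x * (μ.rnDeriv ν x).toReal) ^ 2 ∂ν ≤ β * ∫ x, u x ^ 2 ∂μ := by
  rw [← integral_toReal_rnDeriv_mul hμν, ← integral_const_mul]
  exact integral_mono_of_nonneg (.of_forall fun x ↦ sq_nonneg _)
    (((integrable_toReal_rnDeriv_mul_iff hμν).mpr hu2).const_mul β)
    (ae_sq_mul_toReal_rnDeriv_le hbd u)

end LebesgueDecomposition

theorem sqrt_integral_sq_toReal_rnDeriv_sub_one_le {σ : Measure α} [SigmaFinite σ]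
    [IsFiniteMeasure μ] [IsProbabilityMeasure ν] (hσμ : σ ≪ μ) (hμν : μ ≪ ν) (hνμ : ν ≪ μ)
    {β : ℝ} (hβ : 1 ≤ β) (hbd : ∀ᵐ x ∂ν, (μ.rnDeriv ν x).toReal ≤ β)
    (hbd' : ∀ᵐ x ∂ν, (ν.rnDeriv μ x).toReal ≤ β)
    (hσ : MemLp (fun x ↦ (σ.rnDeriv μ x).toReal) 2 μ) :
    √(∫ x, ((σ.rnDeriv ν x).toReal - 1) ^ 2 ∂ν) ≤
      √β * √(∫ x, ((σ.rnDeriv μ x).toReal - 1) ^ 2 ∂μ) + (β - 1) := by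
  set f := fun x ↦ (σ.rnDeriv μ x).toReal
  set g := fun x ↦ (μ.rnDeriv ν x).toReal
  have hchain :
      ∀ᵐ x ∂ν, ((σ.rnDeriv ν x).toReal - 1) ^ 2 = ((f x - 1) * g x + (g x - 1)) ^ 2 := by
    filter_upwards [Measure.rnDeriv_mul_rnDeriv hσμ (κ := ν)] with x hx
    rw [← hx, Pi.mul_apply, ENNReal.toReal_mul]
    ring
  have hf : Integrable (fun x ↦ (f x - 1) ^ 2) μ := (hσ.sub (memLp_const 1)).integrable_sq
  have hdev : ∀ᵐ x ∂ν, |g x - 1| ≤ β - 1 := ae_abs_toReal_rnDeriv_sub_one_le hνμ hβ hbd hbd'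
  have hg : MemLp (fun x ↦ g x - 1) 2 ν :=
    .of_bound ((Measure.measurable_rnDeriv μ ν).ennreal_toReal.sub_const 1).aestronglyMeasurable
      (β - 1) (hdev.mono fun x hx ↦ by rwa [Real.norm_eq_abs])
  calc √(∫ x, ((σ.rnDeriv ν x).toReal - 1) ^ 2 ∂ν)
      = √(∫ x, ((f x - 1) * g x + (g x - 1)) ^ 2 ∂ν) := by rw [integral_congr_ae hchain]
    _ ≤ √(∫ x, ((f x - 1) * g x) ^ 2 ∂ν) + √(∫ x, (g x - 1) ^ 2 ∂ν) :=
        sqrt_integral_add_sq_le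
          (memLp_two_mul_toReal_rnDeriv hμν hbd
            ((Measure.measurable_rnDeriv σ μ).ennreal_toReal.sub_const 1) hf) hg
    _ ≤ √β * √(∫ x, (f x - 1) ^ 2 ∂μ) + (β - 1) := by
        gcongr
        · rw [← Real.sqrt_mul (by linarith)]
          exact Real.sqrt_le_sqrt (integral_sq_mul_toReal_rnDeriv_le hμν hbd hf)
        · exact sqrt_integral_sq_le_of_ae_abs_le (by linarith) hdev

end MeasureTheory

theorem l2_error_transfer_general
    {d : ℕ}
    (μ μ' σ : Measure (EuclideanSpace ℝ (Fin d)))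
    [IsProbabilityMeasure μ] [IsProbabilityMeasure μ'] [IsProbabilityMeasure σ]
    (hacc : μ ≪ μ') (hacc' : μ' ≪ μ)
    (β : ℝ) (hβ : 1 ≤ β)
    (hbd : ∀ᵐ x ∂μ', (μ.rnDeriv μ' x).toReal ≤ β)
    (hbd' : ∀ᵐ x ∂μ, (μ'.rnDeriv μ x).toReal ≤ β)
    (hσac : σ ≪ μ)
    (hσL2 : MemLp (fun x => (σ.rnDeriv μ x).toReal) 2 μ) :
    Real.sqrt (∫ x, ((σ.rnDeriv μ' x).toReal - 1) ^ 2 ∂μ') ≤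
      β ^ ((3 : ℝ) / 2) * Real.sqrt (∫ x, ((σ.rnDeriv μ x).toReal - 1) ^ 2 ∂μ) +
        Real.sqrt β * (β - 1) := by
  refine (sqrt_integral_sq_toReal_rnDeriv_sub_one_le hσac hacc hacc' hβ hbd
    (hacc'.ae_le hbd') hσL2).trans ?_
  gcongr ?_ * _ + ?_
  · rw [Real.sqrt_eq_rpow]
    exact Real.rpow_le_rpow_of_exponent_le hβ (by norm_num)
  · exact le_mul_of_one_le_left (by linarith) (Real.one_le_sqrt.mpr hβ)

/-- if `μ, μ'` are mutually absolutely continuous probability measures on `K`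
with density ratios bounded by `β` in both directions, and `σ ≪ μ` has `dσ/dμ ∈ L²(μ)`, then
`‖dσ/dμ' − 1‖_{L²(μ')} ≤ β^(3/2)·‖dσ/dμ − 1‖_{L²(μ)} + √β·(β − 1)`. -/
theorem l2_error_transfer
    {d : ℕ} (K : Set (EuclideanSpace ℝ (Fin d)))
    (hKcomp : IsCompact K) (hKconv : Convex ℝ K) (hKint : (interior K).Nonempty)
    (μ μ' σ : Measure (EuclideanSpace ℝ (Fin d)))
    [IsProbabilityMeasure μ] [IsProbabilityMeasure μ'] [IsProbabilityMeasure σ]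
    (hμK : μ Kᶜ = 0) (hμ'K : μ' Kᶜ = 0) (hσK : σ Kᶜ = 0)
    (hacc : μ ≪ μ') (hacc' : μ' ≪ μ)
    (β : ℝ) (hβ : 1 ≤ β)
    (hbd : ∀ᵐ x ∂μ', (μ.rnDeriv μ' x).toReal ≤ β)
    (hbd' : ∀ᵐ x ∂μ, (μ'.rnDeriv μ x).toReal ≤ β)
    (hσac : σ ≪ μ)
    (hσL2 : MemLp (fun x => (σ.rnDeriv μ x).toReal) 2 μ) :
    Real.sqrt (∫ x, ((σ.rnDeriv μ' x).toReal - 1) ^ 2 ∂μ') ≤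
      β ^ ((3 : ℝ) / 2) * Real.sqrt (∫ x, ((σ.rnDeriv μ x).toReal - 1) ^ 2 ∂μ) +
        Real.sqrt β * (β - 1) :=
  l2_error_transfer_general μ μ' σ hacc hacc' β hβ hbd hbd' hσac hσL2
end

section
/- Let μ and μ' be mutually absolutely continuous probability measures on K with dμ/dμ' ≤ β and dμ'/dμ ≤ β almost everywhere for some β ≥ 1. Let P be a Markov kernel on K, reversible with respect to μ', such that for some Δ ∈ (0,1) and every f ∈ L²(μ') with ∫ f dμ' = 0 one has ‖Pf‖_{L²(μ')} ≤ (1 − Δ)·‖f‖_{L²(μ')}. Let σ be a probability measure on K with σ ≪ μ and dσ/dμ ∈ L²(μ). Then for every natural number τ, σP^τ ≪ μ' and ‖d(σP^τ)/dμ' − 1‖_{L²(μ')} ≤ (1 − Δ)^τ · (β^{3/2}·‖dσ/dμ − 1‖_{L²(μ)} + √β·(β − 1)). -/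
/-!
Let `f₀ = dσ/dμ'` and `ρ = dμ/dμ'`. Then `f₀ = (dσ/dμ)·ρ`, so `f₀ - 1 = (dσ/dμ - 1)·ρ + (ρ - 1)`.
Since `∫ g²ρ² dμ' = ∫ g²ρ dμ`, the first term has `L²(μ')`-norm at most `√β·‖dσ/dμ - 1‖_{L²(μ)}`;
since `ρ ≤ β` and `1/ρ = dμ'/dμ ≤ β`, the second is bounded by `β - 1` pointwise.

Reversibility makes `μ'`-densities evolve under `P` itself: if `ν = f·μ'` then `νP = (Pf)·μ'`.
By Jensen and invariance `P` contracts every `Lᵖ(μ')` and preserves the mean, so the density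
`P^τ f₀` of `σP^τ` stays in `L²(μ')` with mean one, and `P^(τ+1) f₀ - 1 = P(P^τ f₀ - 1)` gains
a factor `1 - Δ` from the spectral gap at every step.
-/

open MeasureTheory ProbabilityTheory

/-- The action of a Markov kernel on a (probability) measure: `σP (B) = ∫ P_x(B) dσ(x)`. -/
noncomputable def kernelApply {α : Type*} [MeasurableSpace α]
    (P : Kernel α α) (σ : Measure α) : Measure α :=
  σ.bind (fun x => P x)

/-- The `τ`-fold iterate `σ P^τ` of the action of a Markov kernel on a measure. -/
noncomputable def kernelIter {α : Type*} [MeasurableSpace α]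
    (P : Kernel α α) (τ : ℕ) (σ : Measure α) : Measure α :=
  (kernelApply P)^[τ] σ

open scoped ENNReal

section

variable {α : Type*} [MeasurableSpace α]

namespace ProbabilityTheory.Kernel

variable {μ : Measure α} {κ : Kernel α α}

theorem lintegral_lintegral_swap_of_map_swap_compProd_eq [SFinite μ] [IsSFiniteKernel κ]
    (hrev : (μ ⊗ₘ κ).map Prod.swap = μ ⊗ₘ κ) {g : α × α → ℝ≥0∞} (hg : Measurable g) :
    ∫⁻ x, ∫⁻ y, g (x, y) ∂κ x ∂μ = ∫⁻ x, ∫⁻ y, g (y, x) ∂κ x ∂μ := by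
  rw [← Measure.lintegral_compProd hg, ← hrev, MeasureTheory.lintegral_map hg measurable_swap]
  exact Measure.lintegral_compProd (hg.comp measurable_swap)

theorem bind_withDensity_of_map_swap_compProd_eq [SFinite μ] [IsSFiniteKernel κ]
    (hrev : (μ ⊗ₘ κ).map Prod.swap = μ ⊗ₘ κ) {F : α → ℝ≥0∞} (hF : Measurable F) :
    (μ.withDensity F).bind κ = μ.withDensity (fun y => ∫⁻ x, F x ∂κ y) := by
  ext s hs
  have hind : Measurable (s.indicator (1 : α → ℝ≥0∞)) := measurable_one.indicator hs
  calc (μ.withDensity F).bind κ s = ∫⁻ x, ∫⁻ y, F x * s.indicator 1 y ∂κ x ∂μ := by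
        rw [Measure.bind_apply hs κ.aemeasurable, lintegral_withDensity_eq_lintegral_mul _ hF
          (κ.measurable_coe hs)]
        simp_rw [lintegral_const_mul _ hind, lintegral_indicator_one hs, Pi.mul_apply]
    _ = ∫⁻ x, ∫⁻ y, F y * s.indicator 1 x ∂κ x ∂μ :=
        lintegral_lintegral_swap_of_map_swap_compProd_eq hrev
          ((hF.comp measurable_fst).mul (hind.comp measurable_snd))
    _ = μ.withDensity (fun y => ∫⁻ x, F x ∂κ y) s := by
        simp_rw [lintegral_mul_const _ hF, withDensity_apply _ hs, ← lintegral_indicator hs]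
        congr with x
        by_cases hx : x ∈ s <;> simp [hx]

theorem invariant_of_map_swap_compProd_eq [SFinite μ] [IsMarkovKernel κ]
    (hrev : (μ ⊗ₘ κ).map Prod.swap = μ ⊗ₘ κ) : κ.Invariant μ := by
  simpa [Invariant] using bind_withDensity_of_map_swap_compProd_eq hrev measurable_one

theorem Invariant.ae_integrable {E : Type*} [NormedAddCommGroup E] (hinv : κ.Invariant μ)
    {f : α → E} (hf : Integrable f μ) : ∀ᵐ y ∂μ, Integrable f (κ y) :=
  Measure.ae_integrable_of_integrable_comp (by rwa [hinv.def])

end ProbabilityTheory.Kernel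

noncomputable def kernelIntegral {E : Type*} [NormedAddCommGroup E] [NormedSpace ℝ E]
    (κ : Kernel α α) (f : α → E) (y : α) : E :=
  ∫ x, f x ∂κ y

section kernelIntegral

variable {E : Type*} [NormedAddCommGroup E] [NormedSpace ℝ E] {μ : Measure α} {κ : Kernel α α}

theorem MeasureTheory.StronglyMeasurable.kernelIntegral {f : α → E} (hf : StronglyMeasurable f) :
    StronglyMeasurable (kernelIntegral κ f) :=
  hf.integral_kernel

theorem eLpNorm_kernelIntegral_le [IsMarkovKernel κ] (hinv : κ.Invariant μ) {f : α → E}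
    (hf : StronglyMeasurable f) {p : ℝ≥0∞} (hp1 : 1 ≤ p) (hp : p ≠ ∞) :
    eLpNorm (kernelIntegral κ f) p μ ≤ eLpNorm f p μ := by
  have hp0 : p ≠ 0 := (zero_lt_one.trans_le hp1).ne'
  have hq : 0 < p.toReal := ENNReal.toReal_pos hp0 hp
  have hjensen (y : α) :
      ‖kernelIntegral κ f y‖ₑ ^ p.toReal ≤ ∫⁻ x, ‖f x‖ₑ ^ p.toReal ∂κ y := by
    calc ‖kernelIntegral κ f y‖ₑ ^ p.toReal ≤ eLpNorm f p (κ y) ^ p.toReal := by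
          gcongr
          refine (enorm_integral_le_lintegral_enorm f).trans ?_
          rw [← eLpNorm_one_eq_lintegral_enorm]
          exact eLpNorm_le_eLpNorm_of_exponent_le hp1 hf.aestronglyMeasurable
      _ = ∫⁻ x, ‖f x‖ₑ ^ p.toReal ∂κ y := by
          rw [eLpNorm_eq_lintegral_rpow_enorm_toReal hp0 hp, ← ENNReal.rpow_mul,
            one_div_mul_cancel hq.ne', ENNReal.rpow_one]
  rw [eLpNorm_eq_lintegral_rpow_enorm_toReal hp0 hp, eLpNorm_eq_lintegral_rpow_enorm_toReal hp0 hp]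
  gcongr ?_ ^ _
  calc ∫⁻ y, ‖kernelIntegral κ f y‖ₑ ^ p.toReal ∂μ
      ≤ ∫⁻ y, ∫⁻ x, ‖f x‖ₑ ^ p.toReal ∂κ y ∂μ := lintegral_mono hjensen
    _ = ∫⁻ x, ‖f x‖ₑ ^ p.toReal ∂μ := by
        rw [← Measure.lintegral_bind κ.aemeasurable (hf.enorm.pow_const _).aemeasurable, hinv.def]

theorem MeasureTheory.MemLp.kernelIntegral [IsMarkovKernel κ] (hinv : κ.Invariant μ) {f : α → E}
    (hf : StronglyMeasurable f) {p : ℝ≥0∞} (hfp : MemLp f p μ) (hp1 : 1 ≤ p) (hp : p ≠ ∞) :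
    MemLp (kernelIntegral κ f) p μ :=
  ⟨hf.kernelIntegral.aestronglyMeasurable,
    (eLpNorm_kernelIntegral_le hinv hf hp1 hp).trans_lt hfp.eLpNorm_lt_top⟩

theorem integral_kernelIntegral [IsSFiniteKernel κ] (hinv : κ.Invariant μ) {f : α → E}
    (hf : Integrable f μ) : ∫ y, kernelIntegral κ f y ∂μ = ∫ x, f x ∂μ := by
  have hf' : Integrable f ((κ ∘ₖ Kernel.const Unit μ) ()) := by
    rwa [← Measure.comp_eq_comp_const_apply, hinv.def]
  calc ∫ y, kernelIntegral κ f y ∂μ = ∫ x, f x ∂((κ ∘ₖ Kernel.const Unit μ) ()) := by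
        rw [Kernel.integral_comp hf', Kernel.const_apply]
        rfl
    _ = ∫ x, f x ∂μ := by rw [← Measure.comp_eq_comp_const_apply, hinv.def]

end kernelIntegral

section density

variable {μ : Measure α} {κ : Kernel α α} [IsMarkovKernel κ]

theorem kernelIntegral_sub_const_ae (hinv : κ.Invariant μ) {f : α → ℝ} (hf : Integrable f μ)
    (c : ℝ) : kernelIntegral κ (fun x => f x - c) =ᵐ[μ] fun y => kernelIntegral κ f y - c := by
  filter_upwards [hinv.ae_integrable hf] with y hy
  simp [kernelIntegral, integral_sub hy (integrable_const c)]

theorem kernelApply_withDensity_ofReal [SFinite μ] (hrev : (μ ⊗ₘ κ).map Prod.swap = μ ⊗ₘ κ)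
    {f : α → ℝ} (hf : Measurable f) (hf0 : 0 ≤ f) (hfi : Integrable f μ) :
    kernelApply κ (μ.withDensity fun x => ENNReal.ofReal (f x)) =
      μ.withDensity fun y => ENNReal.ofReal (kernelIntegral κ f y) := by
  rw [kernelApply, Kernel.bind_withDensity_of_map_swap_compProd_eq hrev hf.ennreal_ofReal]
  refine withDensity_congr_ae ?_
  filter_upwards [(Kernel.invariant_of_map_swap_compProd_eq hrev).ae_integrable hfi] with y hy
  exact (ofReal_integral_eq_lintegral_ofReal hy (.of_forall hf0)).symm

theorem kernelIter_withDensity_ofReal [SFinite μ] (hrev : (μ ⊗ₘ κ).map Prod.swap = μ ⊗ₘ κ)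
    {f : α → ℝ} (hf : Measurable f) (hf0 : 0 ≤ f) (hfi : Integrable f μ) (t : ℕ) :
    kernelIter κ t (μ.withDensity fun x => ENNReal.ofReal (f x)) =
      μ.withDensity fun y => ENNReal.ofReal ((kernelIntegral κ)^[t] f y) := by
  induction t generalizing f with
  | zero => rfl
  | succ t ih =>
    have hinv := Kernel.invariant_of_map_swap_compProd_eq hrev
    have hPfi : Integrable (kernelIntegral κ f) μ := memLp_one_iff_integrable.1 <|
      (memLp_one_iff_integrable.2 hfi).kernelIntegral hinv hf.stronglyMeasurable le_rfl
        ENNReal.one_ne_top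
    rw [kernelIter, Function.iterate_succ_apply, Function.iterate_succ_apply, ← kernelIter,
      kernelApply_withDensity_ofReal hrev hf hf0 hfi]
    exact ih hf.stronglyMeasurable.kernelIntegral.measurable (fun y => integral_nonneg hf0) hPfi

theorem withDensity_ofReal_toReal_rnDeriv {σ : Measure α} [SigmaFinite σ] [SigmaFinite μ]
    (hσ : σ ≪ μ) : μ.withDensity (fun x => ENNReal.ofReal (σ.rnDeriv μ x).toReal) = σ := by
  rw [withDensity_congr_ae ((σ.rnDeriv_lt_top μ).mono fun x hx => ENNReal.ofReal_toReal hx.ne),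
    Measure.withDensity_rnDeriv_eq _ _ hσ]

theorem kernelIter_eq_withDensity_iterate [SigmaFinite μ]
    (hrev : (μ ⊗ₘ κ).map Prod.swap = μ ⊗ₘ κ) {σ : Measure α} [IsFiniteMeasure σ] (hσ : σ ≪ μ)
    (t : ℕ) :
    kernelIter κ t σ = μ.withDensity fun y =>
      ENNReal.ofReal ((kernelIntegral κ)^[t] (fun x => (σ.rnDeriv μ x).toReal) y) := by
  conv_lhs => rw [← withDensity_ofReal_toReal_rnDeriv hσ]
  exact kernelIter_withDensity_ofReal hrev (σ.measurable_rnDeriv μ).ennreal_toReal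
    (fun _ => ENNReal.toReal_nonneg) Measure.integrable_toReal_rnDeriv t

theorem toReal_rnDeriv_kernelIter_ae [SigmaFinite μ] (hrev : (μ ⊗ₘ κ).map Prod.swap = μ ⊗ₘ κ)
    {σ : Measure α} [IsFiniteMeasure σ] (hσ : σ ≪ μ) (t : ℕ) :
    (fun x => ((kernelIter κ t σ).rnDeriv μ x).toReal) =ᵐ[μ]
      (kernelIntegral κ)^[t] (fun x => (σ.rnDeriv μ x).toReal) := by
  obtain ⟨hm, h0⟩ : Measurable ((kernelIntegral κ)^[t] (fun x => (σ.rnDeriv μ x).toReal)) ∧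
      0 ≤ (kernelIntegral κ)^[t] (fun x => (σ.rnDeriv μ x).toReal) :=
    Function.Iterate.rec (fun g => Measurable g ∧ 0 ≤ g)
      ⟨(σ.measurable_rnDeriv μ).ennreal_toReal, fun _ => ENNReal.toReal_nonneg⟩
      (fun g hg => ⟨hg.1.stronglyMeasurable.kernelIntegral.measurable,
        fun y => integral_nonneg hg.2⟩) t
  rw [kernelIter_eq_withDensity_iterate hrev hσ t]
  filter_upwards [Measure.rnDeriv_withDensity μ hm.ennreal_ofReal] with x hx
  rw [hx, ENNReal.toReal_ofReal (h0 x)]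

variable [IsProbabilityMeasure μ] {c : ℝ}

theorem sqrt_integral_sq_kernelIntegral_sub_one_le (hinv : κ.Invariant μ)
    (hκ : ∀ g : α → ℝ, MemLp g 2 μ → ∫ x, g x ∂μ = 0 →
      √(∫ x, kernelIntegral κ g x ^ 2 ∂μ) ≤ c * √(∫ x, g x ^ 2 ∂μ))
    {f : α → ℝ} (hf : MemLp f 2 μ) (hf1 : ∫ x, f x ∂μ = 1) :
    √(∫ y, (kernelIntegral κ f y - 1) ^ 2 ∂μ) ≤ c * √(∫ x, (f x - 1) ^ 2 ∂μ) := by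
  have hfi := hf.integrable one_le_two
  rw [integral_congr_ae ((kernelIntegral_sub_const_ae hinv hfi 1).mono fun y hy =>
    congrArg (· ^ 2) hy.symm)]
  refine hκ _ (hf.sub (memLp_const 1)) ?_
  simp [integral_sub hfi (integrable_const 1), hf1]

theorem sqrt_integral_sq_iterate_kernelIntegral_sub_one_le (hinv : κ.Invariant μ) (hc : 0 ≤ c)
    (hκ : ∀ g : α → ℝ, MemLp g 2 μ → ∫ x, g x ∂μ = 0 →
      √(∫ x, kernelIntegral κ g x ^ 2 ∂μ) ≤ c * √(∫ x, g x ^ 2 ∂μ))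
    {f : α → ℝ} (hfm : Measurable f) (hf : MemLp f 2 μ) (hf1 : ∫ x, f x ∂μ = 1) (t : ℕ) :
    √(∫ y, ((kernelIntegral κ)^[t] f y - 1) ^ 2 ∂μ) ≤ c ^ t * √(∫ x, (f x - 1) ^ 2 ∂μ) := by
  induction t generalizing f with
  | zero => simp
  | succ t ih =>
    have hPf : MemLp (kernelIntegral κ f) 2 μ :=
      hf.kernelIntegral hinv hfm.stronglyMeasurable one_le_two ENNReal.ofNat_ne_top
    have hPf1 : ∫ y, kernelIntegral κ f y ∂μ = 1 := by
      rw [integral_kernelIntegral hinv (hf.integrable one_le_two), hf1]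
    calc √(∫ y, ((kernelIntegral κ)^[t + 1] f y - 1) ^ 2 ∂μ)
        ≤ c ^ t * √(∫ y, (kernelIntegral κ f y - 1) ^ 2 ∂μ) :=
          ih hfm.stronglyMeasurable.kernelIntegral.measurable hPf hPf1
      _ ≤ c ^ t * (c * √(∫ x, (f x - 1) ^ 2 ∂μ)) := by
          gcongr
          exact sqrt_integral_sq_kernelIntegral_sub_one_le hinv hκ hf hf1
      _ = c ^ (t + 1) * √(∫ x, (f x - 1) ^ 2 ∂μ) := by ring

end density

section rnDeriv

theorem sq_eLpNorm_two {E : Type*} [NormedAddCommGroup E] {μ : Measure α} (f : α → E) :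
    eLpNorm f 2 μ ^ 2 = ∫⁻ x, ‖f x‖ₑ ^ 2 ∂μ := by
  simpa using eLpNorm_nnreal_pow_eq_lintegral (f := f) (μ := μ) (p := 2) two_ne_zero

theorem sqrt_integral_sq_eq_toReal_eLpNorm {m : Measure α} {h : α → ℝ}
    (hh : AEStronglyMeasurable h m) : √(∫ x, h x ^ 2 ∂m) = (eLpNorm h 2 m).toReal := by
  rw [toReal_eLpNorm hh]
  simpa [Real.sqrt_eq_rpow] using (lpNorm_nnreal_eq_integral_norm_rpow (p := 2) two_ne_zero hh).symm

theorem abs_sub_one_le_of_mul_eq_one {r t β : ℝ} (ht : 0 ≤ t) (hrt : r * t = 1) (hr : r ≤ β)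
    (htβ : t ≤ β) : |r - 1| ≤ β - 1 := by
  have hr0 : 0 < r := by nlinarith
  have hsum : 2 ≤ r + t := by nlinarith [sq_nonneg (r - t)]
  rw [abs_le]; constructor <;> linarith

variable {μ ν : Measure α} {β : ℝ}

theorem ae_abs_toReal_rnDeriv_sub_one_le [SigmaFinite μ] [SigmaFinite ν] (hμν : μ ≪ ν)
    (hνμ : ν ≪ μ) (hbd : ∀ᵐ x ∂ν, (μ.rnDeriv ν x).toReal ≤ β)
    (hbd' : ∀ᵐ x ∂μ, (ν.rnDeriv μ x).toReal ≤ β) :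
    ∀ᵐ x ∂ν, |(μ.rnDeriv ν x).toReal - 1| ≤ β - 1 := by
  have hmul : μ.rnDeriv ν * ν.rnDeriv μ =ᵐ[ν] 1 :=
    hνμ.ae_le ((Measure.rnDeriv_mul_rnDeriv hμν).trans (Measure.rnDeriv_self μ))
  filter_upwards [hmul, hbd, hνμ.ae_le hbd'] with x hx h1 h2
  refine abs_sub_one_le_of_mul_eq_one ENNReal.toReal_nonneg ?_ h1 h2
  simpa using congrArg ENNReal.toReal hx

theorem eLpNorm_mul_toReal_rnDeriv_le [SigmaFinite μ] [SigmaFinite ν] (hμν : μ ≪ ν)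
    (hbd : ∀ᵐ x ∂ν, (μ.rnDeriv ν x).toReal ≤ β) {g : α → ℝ} (hg : Measurable g) :
    eLpNorm (fun x => g x * (μ.rnDeriv ν x).toReal) 2 ν ≤ ENNReal.ofReal √β * eLpNorm g 2 μ := by
  have hρ : ∀ᵐ x ∂μ, μ.rnDeriv ν x ≤ ENNReal.ofReal β := by
    filter_upwards [hμν.ae_le hbd, hμν.ae_le (μ.rnDeriv_lt_top ν)] with x h1 h2
    rw [← ENNReal.ofReal_toReal h2.ne]
    exact ENNReal.ofReal_le_ofReal h1
  rw [← ENNReal.pow_le_pow_left_iff two_ne_zero, mul_pow, sq_eLpNorm_two, sq_eLpNorm_two,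
    ← ENNReal.ofReal_pow (Real.sqrt_nonneg β), Real.sq_sqrt', ENNReal.ofReal_max,
    ENNReal.ofReal_zero, max_eq_left zero_le, ← lintegral_const_mul' _ _ ENNReal.ofReal_ne_top]
  calc ∫⁻ x, ‖g x * (μ.rnDeriv ν x).toReal‖ₑ ^ 2 ∂ν
      = ∫⁻ x, μ.rnDeriv ν x * (μ.rnDeriv ν x * ‖g x‖ₑ ^ 2) ∂ν := by
        refine lintegral_congr_ae ?_
        filter_upwards [μ.rnDeriv_lt_top ν] with x hx
        rw [enorm_mul, Real.enorm_toReal hx.ne]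
        ring
    _ = ∫⁻ x, μ.rnDeriv ν x * ‖g x‖ₑ ^ 2 ∂μ :=
        lintegral_rnDeriv_mul hμν
          ((μ.measurable_rnDeriv ν).mul (hg.enorm.pow_const 2)).aemeasurable
    _ ≤ ∫⁻ x, ENNReal.ofReal β * ‖g x‖ₑ ^ 2 ∂μ :=
        lintegral_mono_ae (hρ.mono fun x hx => by gcongr)

theorem eLpNorm_toReal_rnDeriv_sub_one_le {σ : Measure α} [SigmaFinite μ]
    [IsProbabilityMeasure ν] [SigmaFinite σ] (hμν : μ ≪ ν) (hνμ : ν ≪ μ)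
    (hbd : ∀ᵐ x ∂ν, (μ.rnDeriv ν x).toReal ≤ β) (hbd' : ∀ᵐ x ∂μ, (ν.rnDeriv μ x).toReal ≤ β)
    (hσμ : σ ≪ μ) :
    eLpNorm (fun x => (σ.rnDeriv ν x).toReal - 1) 2 ν ≤
      ENNReal.ofReal √β * eLpNorm (fun x => (σ.rnDeriv μ x).toReal - 1) 2 μ +
        ENNReal.ofReal (β - 1) := by
  have hdecomp : (fun x => (σ.rnDeriv ν x).toReal - 1) =ᵐ[ν]
      (fun x => ((σ.rnDeriv μ x).toReal - 1) * (μ.rnDeriv ν x).toReal) +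
        fun x => (μ.rnDeriv ν x).toReal - 1 := by
    filter_upwards [Measure.rnDeriv_mul_rnDeriv hσμ (κ := ν)] with x hx
    simp only [Pi.add_apply, ← hx, Pi.mul_apply, ENNReal.toReal_mul]
    ring
  have hs : Measurable fun x => (σ.rnDeriv μ x).toReal - 1 :=
    (σ.measurable_rnDeriv μ).ennreal_toReal.sub_const 1
  have hρ : Measurable fun x => (μ.rnDeriv ν x).toReal := (μ.measurable_rnDeriv ν).ennreal_toReal
  rw [eLpNorm_congr_ae hdecomp]
  refine (eLpNorm_add_le (hs.mul hρ).aestronglyMeasurable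
    (hρ.sub_const 1).aestronglyMeasurable one_le_two).trans (add_le_add ?_ ?_)
  · exact eLpNorm_mul_toReal_rnDeriv_le hμν hbd hs
  · have hbound := ae_abs_toReal_rnDeriv_sub_one_le hμν hνμ hbd hbd'
    simp_rw [← Real.norm_eq_abs] at hbound
    simpa using eLpNorm_le_of_ae_bound (p := 2) hbound

theorem sqrt_integral_sq_toReal_rnDeriv_sub_one_le {σ : Measure α} [IsFiniteMeasure μ]
    [IsProbabilityMeasure ν] [SigmaFinite σ] (hμν : μ ≪ ν) (hνμ : ν ≪ μ) (hβ : 1 ≤ β)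
    (hbd : ∀ᵐ x ∂ν, (μ.rnDeriv ν x).toReal ≤ β) (hbd' : ∀ᵐ x ∂μ, (ν.rnDeriv μ x).toReal ≤ β)
    (hσμ : σ ≪ μ) (hσ2 : MemLp (fun x => (σ.rnDeriv μ x).toReal) 2 μ) :
    MemLp (fun x => (σ.rnDeriv ν x).toReal) 2 ν ∧
      √(∫ x, ((σ.rnDeriv ν x).toReal - 1) ^ 2 ∂ν) ≤
        √β * √(∫ x, ((σ.rnDeriv μ x).toReal - 1) ^ 2 ∂μ) + (β - 1) := by
  have hbound := eLpNorm_toReal_rnDeriv_sub_one_le hμν hνμ hbd hbd' hσμ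
  have hs2 : MemLp (fun x => (σ.rnDeriv μ x).toReal - 1) 2 μ := hσ2.sub (memLp_const 1)
  have hfin : ENNReal.ofReal √β * eLpNorm (fun x => (σ.rnDeriv μ x).toReal - 1) 2 μ +
      ENNReal.ofReal (β - 1) ≠ ∞ := by
    have := hs2.eLpNorm_ne_top
    finiteness
  have hf2 : MemLp (fun x => (σ.rnDeriv ν x).toReal - 1) 2 ν :=
    ⟨((σ.measurable_rnDeriv ν).ennreal_toReal.sub_const 1).aestronglyMeasurable,
      hbound.trans_lt hfin.lt_top⟩
  refine ⟨by simpa [Pi.add_def] using hf2.add (memLp_const 1), ?_⟩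
  rw [sqrt_integral_sq_eq_toReal_eLpNorm hf2.1, sqrt_integral_sq_eq_toReal_eLpNorm hs2.1]
  refine (ENNReal.toReal_mono hfin hbound).trans_eq ?_
  rw [ENNReal.toReal_add (by finiteness) ENNReal.ofReal_ne_top, ENNReal.toReal_mul,
    ENNReal.toReal_ofReal (Real.sqrt_nonneg β), ENNReal.toReal_ofReal (by linarith)]

end rnDeriv

end

theorem l2_error_after_kernel_steps_general
    {d : ℕ}
    (μ μ' σ : Measure (EuclideanSpace ℝ (Fin d)))
    [IsProbabilityMeasure μ] [IsProbabilityMeasure μ'] [IsProbabilityMeasure σ]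
    (hacc : μ ≪ μ') (hacc' : μ' ≪ μ)
    (β : ℝ) (hβ : 1 ≤ β)
    (hbd : ∀ᵐ x ∂μ', (μ.rnDeriv μ' x).toReal ≤ β)
    (hbd' : ∀ᵐ x ∂μ, (μ'.rnDeriv μ x).toReal ≤ β)
    (P : Kernel (EuclideanSpace ℝ (Fin d)) (EuclideanSpace ℝ (Fin d)))
    [IsMarkovKernel P]
    (hrev : (μ' ⊗ₘ P).map Prod.swap = μ' ⊗ₘ P)
    (Δ : ℝ) (hΔ1 : Δ < 1)
    (hcontract : ∀ f : EuclideanSpace ℝ (Fin d) → ℝ, MemLp f 2 μ' →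
      (∫ x, f x ∂μ') = 0 →
      Real.sqrt (∫ x, (∫ y, f y ∂(P x)) ^ 2 ∂μ') ≤
        (1 - Δ) * Real.sqrt (∫ x, (f x) ^ 2 ∂μ'))
    (hσac : σ ≪ μ)
    (hσL2 : MemLp (fun x => (σ.rnDeriv μ x).toReal) 2 μ)
    (τ : ℕ) :
    kernelIter P τ σ ≪ μ' ∧
    Real.sqrt (∫ x, (((kernelIter P τ σ).rnDeriv μ' x).toReal - 1) ^ 2 ∂μ') ≤
      (1 - Δ) ^ τ *
        (β ^ ((3 : ℝ) / 2) * Real.sqrt (∫ x, ((σ.rnDeriv μ x).toReal - 1) ^ 2 ∂μ) +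
          Real.sqrt β * (β - 1)) := by
  have hσμ' : σ ≪ μ' := hσac.trans hacc
  obtain ⟨hf₀2, hbase⟩ :=
    sqrt_integral_sq_toReal_rnDeriv_sub_one_le hacc hacc' hβ hbd hbd' hσac hσL2
  have hmean : ∫ x, (σ.rnDeriv μ' x).toReal ∂μ' = 1 := by
    simp [Measure.integral_toReal_rnDeriv hσμ']
  have hweaken : √β * √(∫ x, ((σ.rnDeriv μ x).toReal - 1) ^ 2 ∂μ) + (β - 1) ≤
      β ^ ((3 : ℝ) / 2) * √(∫ x, ((σ.rnDeriv μ x).toReal - 1) ^ 2 ∂μ) + √β * (β - 1) := by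
    gcongr
    · rw [Real.sqrt_eq_rpow]
      exact Real.rpow_le_rpow_of_exponent_le hβ (by norm_num)
    · exact le_mul_of_one_le_left (by linarith) (Real.one_le_sqrt.2 hβ)
  refine ⟨kernelIter_eq_withDensity_iterate hrev hσμ' τ ▸ withDensity_absolutelyContinuous _ _, ?_⟩
  rw [integral_congr_ae ((toReal_rnDeriv_kernelIter_ae hrev hσμ' τ).mono fun x hx =>
    congrArg (fun r => (r - 1) ^ 2) hx)]
  calc _ ≤ (1 - Δ) ^ τ * √(∫ x, ((σ.rnDeriv μ' x).toReal - 1) ^ 2 ∂μ') :=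
        sqrt_integral_sq_iterate_kernelIntegral_sub_one_le
          (Kernel.invariant_of_map_swap_compProd_eq hrev) (by linarith) hcontract
          (σ.measurable_rnDeriv μ').ennreal_toReal hf₀2 hmean τ
    _ ≤ _ := by gcongr; exact hbase.trans hweaken

/-- if `μ, μ'` are mutually absolutely continuous probability measures on `K`
with density ratios bounded by `β` in both directions, `P` is a Markov kernel reversible with
respect to `μ'` contracting mean-zero functions in `L²(μ')` by a factor `1 − Δ`, and `σ ≪ μ`
has `dσ/dμ ∈ L²(μ)`, then for every `τ`, `σP^τ ≪ μ'` and
`‖d(σP^τ)/dμ' − 1‖_{L²(μ')} ≤ (1 − Δ)^τ·(β^(3/2)·‖dσ/dμ − 1‖_{L²(μ)} + √β·(β − 1))`. -/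
theorem l2_error_after_kernel_steps
    {d : ℕ} (K : Set (EuclideanSpace ℝ (Fin d)))
    (hKcomp : IsCompact K) (hKconv : Convex ℝ K) (hKint : (interior K).Nonempty)
    (μ μ' σ : Measure (EuclideanSpace ℝ (Fin d)))
    [IsProbabilityMeasure μ] [IsProbabilityMeasure μ'] [IsProbabilityMeasure σ]
    (hμK : μ Kᶜ = 0) (hμ'K : μ' Kᶜ = 0) (hσK : σ Kᶜ = 0)
    (hacc : μ ≪ μ') (hacc' : μ' ≪ μ)
    (β : ℝ) (hβ : 1 ≤ β)
    (hbd : ∀ᵐ x ∂μ', (μ.rnDeriv μ' x).toReal ≤ β)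
    (hbd' : ∀ᵐ x ∂μ, (μ'.rnDeriv μ x).toReal ≤ β)
    (P : Kernel (EuclideanSpace ℝ (Fin d)) (EuclideanSpace ℝ (Fin d)))
    [IsMarkovKernel P]
    (hPsupp : ∀ x ∈ K, (P x) Kᶜ = 0)
    (hrev : (μ' ⊗ₘ P).map Prod.swap = μ' ⊗ₘ P)
    (Δ : ℝ) (hΔ0 : 0 < Δ) (hΔ1 : Δ < 1)
    (hcontract : ∀ f : EuclideanSpace ℝ (Fin d) → ℝ, MemLp f 2 μ' →
      (∫ x, f x ∂μ') = 0 →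
      Real.sqrt (∫ x, (∫ y, f y ∂(P x)) ^ 2 ∂μ') ≤
        (1 - Δ) * Real.sqrt (∫ x, (f x) ^ 2 ∂μ'))
    (hσac : σ ≪ μ)
    (hσL2 : MemLp (fun x => (σ.rnDeriv μ x).toReal) 2 μ)
    (τ : ℕ) :
    kernelIter P τ σ ≪ μ' ∧
    Real.sqrt (∫ x, (((kernelIter P τ σ).rnDeriv μ' x).toReal - 1) ^ 2 ∂μ') ≤
      (1 - Δ) ^ τ *
        (β ^ ((3 : ℝ) / 2) * Real.sqrt (∫ x, ((σ.rnDeriv μ x).toReal - 1) ^ 2 ∂μ) +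
          Real.sqrt β * (β - 1)) :=
  l2_error_after_kernel_steps_general μ μ' σ hacc hacc' β hβ hbd hbd' P hrev Δ hΔ1 hcontract hσac
    hσL2 τ
end

section
/- Let (β_t)_{t≥0} be a nondecreasing real sequence with β_t ≥ 1, let (Δ_t)_{t≥0} be a nonincreasing sequence with 0 < Δ_t ≤ 1/2, and suppose β_t^{3/2} ≤ 1 + Δ_t²/(1 − Δ_t) for all t ≥ 1. Let (x_t)_{t≥0} be a real sequence with x_0 ≤ √β_0·(β_0 − 1)/Δ_0 and x_t ≤ (1 − Δ_t)·(β_t^{3/2}·x_{t−1} + √β_t·(β_t − 1)) for all t ≥ 1. Then x_t ≤ √β_t·(β_t − 1)/Δ_t for all t ≥ 0. -/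
/-- one-step tracking invariant.  If `β` is nondecreasing with `β t ≥ 1`,
`Δ` is nonincreasing with `0 < Δ t ≤ 1/2`, `β t ^ (3/2) ≤ 1 + Δ t ^ 2 / (1 - Δ t)` for `t ≥ 1`,
`x 0 ≤ √(β 0)·(β 0 − 1)/Δ 0`, and for `t ≥ 1`
`x t ≤ (1 − Δ t)·(β t ^ (3/2)·x (t−1) + √(β t)·(β t − 1))`,
then `x t ≤ √(β t)·(β t − 1)/Δ t` for all `t`. -/
theorem one_step_tracking (β Δ x : ℕ → ℝ)
    (hβ1 : ∀ t, 1 ≤ β t) (hβmono : Monotone β)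
    (hΔpos : ∀ t, 0 < Δ t) (hΔhalf : ∀ t, Δ t ≤ 1 / 2) (hΔanti : Antitone Δ)
    (hcond : ∀ t, 1 ≤ t → β t ^ ((3 : ℝ) / 2) ≤ 1 + (Δ t) ^ 2 / (1 - Δ t))
    (hx0 : x 0 ≤ Real.sqrt (β 0) * (β 0 - 1) / Δ 0)
    (hrec : ∀ t, 1 ≤ t →
      x t ≤ (1 - Δ t) * (β t ^ ((3 : ℝ) / 2) * x (t - 1) +
        Real.sqrt (β t) * (β t - 1))) :
    ∀ t, x t ≤ Real.sqrt (β t) * (β t - 1) / Δ t := by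
  intro t
  induction t with
  | zero => exact hx0
  | succ n ih =>
    set b := β (n + 1) with hb
    set d := Δ (n + 1) with hd
    have hdpos : 0 < d := hΔpos _
    have hd2 : d ≤ 1 / 2 := hΔhalf _
    have h1d : 0 < 1 - d := by linarith
    have hb1 : 1 ≤ b := hβ1 _
    have hs1 : 1 ≤ Real.sqrt b := by
      rw [show (1:ℝ) = Real.sqrt 1 by simp]
      exact Real.sqrt_le_sqrt hb1
    set s := Real.sqrt b with hsdef
    set N := s * (b - 1) with hN
    have hNnn : 0 ≤ N := mul_nonneg (by linarith) (by linarith)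
    have hB1 : 1 ≤ b ^ ((3:ℝ)/2) := by
      calc (1:ℝ) = (1:ℝ) ^ ((3:ℝ)/2) := by simp
        _ ≤ b ^ ((3:ℝ)/2) := Real.rpow_le_rpow (by norm_num) hb1 (by norm_num)
    set B := b ^ ((3:ℝ)/2) with hBdef
    -- previous bound is ≤ current bound
    have hmono : Real.sqrt (β n) * (β n - 1) / Δ n ≤ N / d := by
      apply div_le_div₀ hNnn _ hdpos (hΔanti (Nat.le_succ n))
      apply mul_le_mul (Real.sqrt_le_sqrt (hβmono (Nat.le_succ n)))
        (by have := hβmono (Nat.le_succ n); linarith) (by have := hβ1 n; linarith)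
        (by linarith)
    have hxn : x n ≤ N / d := le_trans ih hmono
    -- key algebraic fact: (1-d)*(B+d) ≤ 1
    have hcnd := hcond (n + 1) (by omega)
    have hdm : d ^ 2 / (1 - d) * (1 - d) = d ^ 2 := div_mul_cancel₀ _ (ne_of_gt h1d)
    have hkey : (1 - d) * (B + d) ≤ 1 := by nlinarith [hcnd]
    have h2 := hrec (n + 1) (by omega)
    simp only [Nat.add_sub_cancel] at h2
    have h3 : (1 - d) * (B * x n + N) ≤ (1 - d) * (B * (N / d) + N) := by
      have : B * x n ≤ B * (N / d) :=
        mul_le_mul_of_nonneg_left hxn (by linarith)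
      nlinarith
    have h4 : (1 - d) * (B * (N / d) + N) ≤ N / d := by
      rw [le_div_iff₀ hdpos]
      have hNd : N / d * d = N := div_mul_cancel₀ _ (ne_of_gt hdpos)
      nlinarith [mul_nonneg hNnn hdpos.le]
    calc x (n + 1) ≤ (1 - d) * (B * x n + N) := h2
      _ ≤ (1 - d) * (B * (N / d) + N) := h3
      _ ≤ N / d := h4
end

section
/- Let (β_t)_{t≥1} and (Δ_t)_{t≥1} be real sequences with β_t ≥ 1 and Δ_t ∈ (0,1), let (ε_t)_{t≥0} be a sequence of positive reals, and let (τ_t)_{t≥1} be natural numbers satisfying τ_t ≥ (1/Δ_t)·log((β_t^{3/2}·ε_{t−1} + √β_t·(β_t − 1)) / ε_t) for each t ≥ 1. Let (x_t)_{t≥0} be a real sequence with x_0 ≤ ε_0 and x_t ≤ (1 − Δ_t)^{τ_t}·(β_t^{3/2}·x_{t−1} + √β_t·(β_t − 1)) for all t ≥ 1. Then x_t ≤ ε_t for all t ≥ 0. -/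
/-- multi-step tracking.  If for each `t ≥ 1` the number of steps satisfies
`τ t ≥ (1/Δ t)·log((β t^(3/2)·ε (t−1) + √(β t)·(β t − 1))/ε t)`, `x 0 ≤ ε 0`, and
`x t ≤ (1 − Δ t)^(τ t)·(β t^(3/2)·x (t−1) + √(β t)·(β t − 1))` for `t ≥ 1`,
then `x t ≤ ε t` for all `t`. -/
theorem multi_step_tracking (β Δ ε : ℕ → ℝ) (τ : ℕ → ℕ) (x : ℕ → ℝ)
    (hβ : ∀ t, 1 ≤ t → 1 ≤ β t)
    (hΔ0 : ∀ t, 1 ≤ t → 0 < Δ t) (hΔ1 : ∀ t, 1 ≤ t → Δ t < 1)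
    (hε : ∀ t, 0 < ε t)
    (hτ : ∀ t, 1 ≤ t →
      (1 / Δ t) * Real.log ((β t ^ ((3 : ℝ) / 2) * ε (t - 1) +
        Real.sqrt (β t) * (β t - 1)) / ε t) ≤ (τ t : ℝ))
    (hx0 : x 0 ≤ ε 0)
    (hrec : ∀ t, 1 ≤ t →
      x t ≤ (1 - Δ t) ^ (τ t) * (β t ^ ((3 : ℝ) / 2) * x (t - 1) +
        Real.sqrt (β t) * (β t - 1))) :
    ∀ t, x t ≤ ε t := by
  intro t
  induction t with
  | zero => exact hx0
  | succ n ih =>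
    have ht : 1 ≤ n + 1 := Nat.le_add_left 1 n
    have hβ' := hβ _ ht
    have hΔ0' := hΔ0 _ ht
    have hΔ1' := hΔ1 _ ht
    have h1Δ : (0:ℝ) < 1 - Δ (n+1) := by linarith
    have hpow : (0:ℝ) < (1 - Δ (n+1)) ^ (τ (n+1)) := pow_pos h1Δ _
    have hrpow : (0:ℝ) < β (n+1) ^ ((3:ℝ)/2) :=
      Real.rpow_pos_of_pos (by linarith) _
    have hsqrt : (0:ℝ) ≤ Real.sqrt (β (n+1)) * (β (n+1) - 1) :=
      mul_nonneg (Real.sqrt_nonneg _) (by linarith)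
    set A : ℝ := β (n+1) ^ ((3:ℝ)/2) * ε n + Real.sqrt (β (n+1)) * (β (n+1) - 1) with hA
    have hApos : 0 < A := by
      have := hε n
      have : 0 < β (n+1) ^ ((3:ℝ)/2) * ε n := mul_pos hrpow this
      positivity
    have hτ' := hτ _ ht
    have hrec' := hrec (n+1) ht
    simp only [Nat.add_sub_cancel] at hτ' hrec'
    -- key: (1-Δ)^τ * A ≤ ε (n+1)
    have hlog1 : Real.log (1 - Δ (n+1)) ≤ -Δ (n+1) := by
      have := Real.log_le_sub_one_of_pos h1Δ
      linarith
    have hlogA : Real.log A - Real.log (ε (n+1)) ≤ (τ (n+1) : ℝ) * Δ (n+1) := by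
      have h := hτ'
      rw [Real.log_div (ne_of_gt hApos) (ne_of_gt (hε (n+1)))] at h
      have h2 : (1 / Δ (n+1)) * (Real.log A - Real.log (ε (n+1))) * Δ (n+1) ≤
          (τ (n+1) : ℝ) * Δ (n+1) := by
        exact mul_le_mul_of_nonneg_right h hΔ0'.le
      have h3 : (1 / Δ (n+1)) * (Real.log A - Real.log (ε (n+1))) * Δ (n+1) =
          Real.log A - Real.log (ε (n+1)) := by
        field_simp
      linarith [h2, h3.symm.le]
    have hτnn : (0:ℝ) ≤ (τ (n+1) : ℝ) := Nat.cast_nonneg _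
    have hlogkey : Real.log ((1 - Δ (n+1)) ^ (τ (n+1)) * A) ≤ Real.log (ε (n+1)) := by
      rw [Real.log_mul (ne_of_gt hpow) (ne_of_gt hApos), Real.log_pow]
      have h4 : (τ (n+1) : ℝ) * Real.log (1 - Δ (n+1)) ≤ -((τ (n+1) : ℝ) * Δ (n+1)) := by
        nlinarith
      linarith
    have hkey : (1 - Δ (n+1)) ^ (τ (n+1)) * A ≤ ε (n+1) := by
      have := Real.exp_log (mul_pos hpow hApos)
      have h5 := Real.exp_le_exp.mpr hlogkey
      rw [Real.exp_log (mul_pos hpow hApos), Real.exp_log (hε (n+1))] at h5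
      exact h5
    have hstep : x (n+1) ≤ (1 - Δ (n+1)) ^ (τ (n+1)) * A := by
      refine hrec'.trans ?_
      apply mul_le_mul_of_nonneg_left _ hpow.le
      have : β (n+1) ^ ((3:ℝ)/2) * x n ≤ β (n+1) ^ ((3:ℝ)/2) * ε n :=
        mul_le_mul_of_nonneg_left ih hrpow.le
      linarith
    linarith
end

section
/- Let μ and μ' be probability measures on K with μ ≪ μ' and α = ‖dμ/dμ'‖_{L²(μ')} < ∞. Let P be a Markov kernel on K, reversible with respect to μ', such that for some Δ ∈ (0,1) and every f ∈ L²(μ') with ∫ f dμ' = 0 one has ‖Pf‖_{L²(μ')} ≤ (1 − Δ)·‖f‖_{L²(μ')}. Let ε > 0 and let τ be a natural number with τ ≥ (1/Δ)·log(α/ε). Then for every probability measure σ on K, the total variation distance satisfies d_TV(σP^τ, μ') ≤ d_TV(σ, μ) + ε. -/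
open MeasureTheory ProbabilityTheory

/-- Total variation distance between two measures:
the supremum of `|μ B − ν B|` over measurable sets `B`. -/
noncomputable def tvDist {α : Type*} [MeasurableSpace α] (μ ν : Measure α) : ℝ :=
  sSup { r : ℝ | ∃ B : Set α, MeasurableSet B ∧ r = |(μ B).toReal - (ν B).toReal| }

/-!
Split `d_TV(σP^τ, μ') ≤ d_TV(σP^τ, μP^τ) + d_TV(μP^τ, μ')`. The first term is at most
`d_TV(σ, μ)`, since a Markov kernel does not increase total variation. For the second,
reversibility shows that `μP^k` has density `P^k g` with respect to `μ'`, where `g = dμ/dμ'`;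
as `P^k g - 1` has mean zero, the spectral gap gives
`‖P^k g - 1‖₂ ≤ (1 - Δ)^k ‖g - 1‖₂ ≤ (1 - Δ)^k α`. Total variation is bounded by this `L²`
norm (Cauchy–Schwarz), and the choice of `τ` makes `(1 - Δ)^τ α ≤ ε`.
-/

open scoped ENNReal

variable {X : Type*} [MeasurableSpace X]

section Integrals

lemma sq_lintegral_le_lintegral_sq {ν : Measure X} [IsProbabilityMeasure ν] {g : X → ℝ≥0∞}
    (hg : AEMeasurable g ν) :
    (∫⁻ x, g x ∂ν) ^ 2 ≤ ∫⁻ x, g x ^ 2 ∂ν := by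
  have h := eLpNorm_le_eLpNorm_of_exponent_le (μ := ν) one_le_two hg.aestronglyMeasurable
  rw [eLpNorm_one_eq_lintegral_enorm,
    eLpNorm_eq_lintegral_rpow_enorm_toReal two_ne_zero ENNReal.ofNat_ne_top] at h
  simp only [enorm_eq_self, ENNReal.toReal_ofNat] at h
  calc (∫⁻ x, g x ∂ν) ^ 2 ≤ ((∫⁻ x, g x ^ (2 : ℝ) ∂ν) ^ (1 / (2 : ℝ))) ^ 2 := by gcongr
    _ = ∫⁻ x, g x ^ 2 ∂ν := by
      simp_rw [← ENNReal.rpow_natCast, ← ENNReal.rpow_mul]; norm_num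

lemma memLp_two_toReal_iff {ν : Measure X} {g : X → ℝ≥0∞}
    (hg : AEMeasurable g ν) (hfin : ∀ᵐ x ∂ν, g x ≠ ∞) :
    MemLp (fun x => (g x).toReal) 2 ν ↔ ∫⁻ x, g x ^ 2 ∂ν ≠ ∞ := by
  rw [memLp_two_iff_integrable_sq hg.ennreal_toReal.aestronglyMeasurable]
  simp_rw [← ENNReal.toReal_pow]
  exact integrable_toReal_iff (hg.pow_const 2) (hfin.mono fun _ hx => ENNReal.pow_ne_top hx)

lemma integral_abs_le_sqrt_integral_sq {ν : Measure X} [IsProbabilityMeasure ν] {f : X → ℝ}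
    (hf : MemLp f 2 ν) : ∫ x, |f x| ∂ν ≤ Real.sqrt (∫ x, f x ^ 2 ∂ν) := by
  have h := variance_nonneg (fun x => |f x|) ν
  rw [variance_eq_sub (X := fun x => |f x|) hf.abs] at h
  simp only [Pi.pow_apply, sq_abs] at h
  exact Real.le_sqrt_of_sq_le (by linarith)

lemma integral_sub_integral_sq_le {ν : Measure X} [IsProbabilityMeasure ν] {f : X → ℝ}
    (hf : MemLp f 2 ν) : ∫ x, (f x - ∫ y, f y ∂ν) ^ 2 ∂ν ≤ ∫ x, f x ^ 2 ∂ν := by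
  rw [← variance_eq_integral hf.aestronglyMeasurable.aemeasurable, variance_eq_sub hf]
  simp only [Pi.pow_apply]
  nlinarith [sq_nonneg (∫ y, f y ∂ν)]

end Integrals

section TotalVariation

lemma tvDist_bddAbove (μ ν : Measure X) [IsFiniteMeasure μ] [IsFiniteMeasure ν] :
    BddAbove { r : ℝ | ∃ B : Set X, MeasurableSet B ∧ r = |(μ B).toReal - (ν B).toReal| } := by
  refine ⟨(μ Set.univ).toReal + (ν Set.univ).toReal, ?_⟩
  rintro r ⟨B, -, rfl⟩
  have hμ : (μ B).toReal ≤ (μ Set.univ).toReal := measureReal_mono (Set.subset_univ B)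
  have hν : (ν B).toReal ≤ (ν Set.univ).toReal := measureReal_mono (Set.subset_univ B)
  have hμ0 : 0 ≤ (μ B).toReal := ENNReal.toReal_nonneg
  have hν0 : 0 ≤ (ν B).toReal := ENNReal.toReal_nonneg
  rw [abs_sub_le_iff]
  constructor <;> linarith

lemma abs_sub_le_tvDist (μ ν : Measure X) [IsFiniteMeasure μ] [IsFiniteMeasure ν]
    {B : Set X} (hB : MeasurableSet B) :
    |(μ B).toReal - (ν B).toReal| ≤ tvDist μ ν :=
  le_csSup (tvDist_bddAbove μ ν) ⟨B, hB, rfl⟩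

lemma tvDist_le_of_forall {μ ν : Measure X} {c : ℝ}
    (h : ∀ B : Set X, MeasurableSet B → |(μ B).toReal - (ν B).toReal| ≤ c) :
    tvDist μ ν ≤ c :=
  csSup_le ⟨_, ∅, .empty, rfl⟩ fun _ ⟨B, hB, hr⟩ => hr ▸ h B hB

lemma tvDist_comm (μ ν : Measure X) : tvDist μ ν = tvDist ν μ := by
  simp only [tvDist, abs_sub_comm]

lemma tvDist_triangle (μ ν ρ : Measure X) [IsFiniteMeasure μ] [IsFiniteMeasure ν]
    [IsFiniteMeasure ρ] : tvDist μ ρ ≤ tvDist μ ν + tvDist ν ρ :=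
  tvDist_le_of_forall fun _ hB => (abs_sub_le _ _ _).trans <|
    add_le_add (abs_sub_le_tvDist μ ν hB) (abs_sub_le_tvDist ν ρ hB)

/-- With densities `f, g` of `σ, μ` w.r.t. `σ + μ`, the difference is `∫ (f - g) h`, which is
at most `(σ - μ) {g ≤ f}`. -/
lemma integral_sub_integral_le_tvDist (σ μ : Measure X) [IsFiniteMeasure σ]
    [IsFiniteMeasure μ] {h : X → ℝ} (hm : Measurable h) (h0 : ∀ x, 0 ≤ h x)
    (h1 : ∀ x, h x ≤ 1) :
    ∫ x, h x ∂σ - ∫ x, h x ∂μ ≤ tvDist σ μ := by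
  set ρ := σ + μ
  have hσρ : σ ≪ ρ := Measure.AbsolutelyContinuous.rfl.add_right μ
  have hμρ : μ ≪ ρ := Measure.AbsolutelyContinuous.rfl.add_right' σ
  set f := fun x => (σ.rnDeriv ρ x).toReal
  set g := fun x => (μ.rnDeriv ρ x).toReal
  have hf : Integrable f ρ := Measure.integrable_toReal_rnDeriv
  have hg : Integrable g ρ := Measure.integrable_toReal_rnDeriv
  set A := {x | g x ≤ f x}
  have hA : MeasurableSet A :=
    measurableSet_le (Measure.measurable_rnDeriv μ ρ).ennreal_toReal
      (Measure.measurable_rnDeriv σ ρ).ennreal_toReal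
  have hbdd : ∀ x, ‖h x‖ ≤ 1 := fun x => by rw [Real.norm_of_nonneg (h0 x)]; exact h1 x
  have hfh : Integrable (fun x => f x * h x) ρ :=
    hf.mul_bdd hm.aestronglyMeasurable (.of_forall hbdd)
  have hgh : Integrable (fun x => g x * h x) ρ :=
    hg.mul_bdd hm.aestronglyMeasurable (.of_forall hbdd)
  have hpt : ∀ x, (f x - g x) * h x ≤ A.indicator (fun x => f x - g x) x := by
    intro x
    by_cases hx : x ∈ A
    · rw [Set.indicator_of_mem hx]
      exact mul_le_of_le_one_right (sub_nonneg.2 hx) (h1 x)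
    · rw [Set.indicator_of_notMem hx]
      exact mul_nonpos_of_nonpos_of_nonneg (sub_nonpos.2 (not_le.1 hx).le) (h0 x)
  calc ∫ x, h x ∂σ - ∫ x, h x ∂μ = ∫ x, (f x - g x) * h x ∂ρ := by
        simp_rw [sub_mul]
        rw [integral_sub hfh hgh, integral_toReal_rnDeriv_mul hσρ,
          integral_toReal_rnDeriv_mul hμρ]
    _ ≤ ∫ x, A.indicator (fun x => f x - g x) x ∂ρ :=
        integral_mono ((hf.sub hg).mul_bdd hm.aestronglyMeasurable (.of_forall hbdd))
          ((hf.sub hg).indicator hA) hpt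
    _ = (σ A).toReal - (μ A).toReal := by
        rw [integral_indicator hA, integral_sub hf.integrableOn hg.integrableOn,
          Measure.setIntegral_toReal_rnDeriv hσρ, Measure.setIntegral_toReal_rnDeriv hμρ]
        rfl
    _ ≤ tvDist σ μ := (le_abs_self _).trans (abs_sub_le_tvDist σ μ hA)

lemma tvDist_withDensity_le_integral_abs (ν : Measure X) [IsFiniteMeasure ν] {g : X → ℝ≥0∞}
    (hg : Measurable g) (hfin : ∫⁻ x, g x ∂ν ≠ ∞) :
    tvDist (ν.withDensity g) ν ≤ ∫ x, |(g x).toReal - 1| ∂ν := by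
  have hgint : Integrable (fun x => (g x).toReal) ν :=
    integrable_toReal_of_lintegral_ne_top hg.aemeasurable hfin
  refine tvDist_le_of_forall fun B hB => ?_
  have hdens : (ν.withDensity g B).toReal = ∫ x in B, (g x).toReal ∂ν := by
    rw [withDensity_apply _ hB, integral_toReal hg.aemeasurable
      (ae_restrict_of_ae (ae_lt_top hg hfin))]
  calc |(ν.withDensity g B).toReal - (ν B).toReal|
      = |∫ x in B, ((g x).toReal - 1) ∂ν| := by
        rw [hdens, integral_sub hgint.integrableOn
          (integrable_const 1).integrableOn]
        simp [measureReal_def]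
    _ ≤ ∫ x in B, |(g x).toReal - 1| ∂ν := abs_integral_le_integral_abs
    _ ≤ ∫ x, |(g x).toReal - 1| ∂ν :=
        setIntegral_le_integral (hgint.sub (integrable_const 1)).abs
          (.of_forall fun _ => abs_nonneg _)

end TotalVariation

section KernelAction

variable (P : Kernel X X)

lemma kernelApply_apply (σ : Measure X) {B : Set X} (hB : MeasurableSet B) :
    kernelApply P σ B = ∫⁻ x, P x B ∂σ :=
  Measure.bind_apply hB P.aemeasurable

instance [IsMarkovKernel P] (σ : Measure X) [IsProbabilityMeasure σ] :
    IsProbabilityMeasure (kernelApply P σ) :=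
  ⟨by simp [kernelApply_apply P σ .univ]⟩

lemma kernelIter_succ (k : ℕ) (σ : Measure X) :
    kernelIter P (k + 1) σ = kernelApply P (kernelIter P k σ) :=
  Function.iterate_succ_apply' _ _ _

instance [IsMarkovKernel P] (k : ℕ) (σ : Measure X) [IsProbabilityMeasure σ] :
    IsProbabilityMeasure (kernelIter P k σ) := by
  induction k with
  | zero => assumption
  | succ k _ => rw [kernelIter_succ]; infer_instance

lemma toReal_kernelApply_apply [IsFiniteKernel P] (σ : Measure X) [IsFiniteMeasure σ]
    {B : Set X} (hB : MeasurableSet B) :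
    (kernelApply P σ B).toReal = ∫ x, (P x B).toReal ∂σ := by
  rw [kernelApply_apply P σ hB, integral_toReal (P.measurable_coe hB).aemeasurable
    (.of_forall fun _ => measure_lt_top _ _)]

lemma tvDist_kernelApply_le [IsMarkovKernel P] (σ ν : Measure X) [IsProbabilityMeasure σ]
    [IsProbabilityMeasure ν] :
    tvDist (kernelApply P σ) (kernelApply P ν) ≤ tvDist σ ν := by
  refine tvDist_le_of_forall fun B hB => ?_
  have hm : Measurable fun x => (P x B).toReal := (P.measurable_coe hB).ennreal_toReal
  have h0 : ∀ x, 0 ≤ (P x B).toReal := fun _ => ENNReal.toReal_nonneg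
  have h1 : ∀ x, (P x B).toReal ≤ 1 := fun _ => measureReal_le_one
  rw [toReal_kernelApply_apply P σ hB, toReal_kernelApply_apply P ν hB, abs_sub_le_iff]
  exact ⟨integral_sub_integral_le_tvDist σ ν hm h0 h1,
    tvDist_comm ν σ ▸ integral_sub_integral_le_tvDist ν σ hm h0 h1⟩

lemma tvDist_kernelIter_le [IsMarkovKernel P] (k : ℕ) (σ ν : Measure X) [IsProbabilityMeasure σ]
    [IsProbabilityMeasure ν] : tvDist (kernelIter P k σ) (kernelIter P k ν) ≤ tvDist σ ν := by
  induction k with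
  | zero => exact le_rfl
  | succ k ih =>
    rw [kernelIter_succ, kernelIter_succ]
    exact (tvDist_kernelApply_le P _ _).trans ih

end KernelAction

section Reversible

/-- The action `g ↦ Pg` on densities, taken `ℝ≥0∞`-valued so that it needs no integrability
side conditions. -/
noncomputable def kernelLIntegral (P : Kernel X X) (g : X → ℝ≥0∞) (x : X) : ℝ≥0∞ :=
  ∫⁻ y, g y ∂P x

lemma measurable_kernelLIntegral (P : Kernel X X) {g : X → ℝ≥0∞} (hg : Measurable g) :
    Measurable (kernelLIntegral P g) :=
  hg.lintegral_kernel

lemma measurable_iterate_kernelLIntegral (P : Kernel X X) {g : X → ℝ≥0∞} (hg : Measurable g)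
    (k : ℕ) : Measurable ((kernelLIntegral P)^[k] g) := by
  induction k with
  | zero => exact hg
  | succ k ih => rw [Function.iterate_succ_apply']; exact measurable_kernelLIntegral P ih

variable {P : Kernel X X} {π : Measure X}

lemma lintegral_mul_kernelLIntegral_comm [IsSFiniteKernel P] [SFinite π]
    (hrev : (π ⊗ₘ P).map Prod.swap = π ⊗ₘ P)
    {f g : X → ℝ≥0∞} (hf : Measurable f) (hg : Measurable g) :
    ∫⁻ x, f x * kernelLIntegral P g x ∂π = ∫⁻ x, g x * kernelLIntegral P f x ∂π := by
  have hfg : Measurable fun p : X × X => f p.1 * g p.2 :=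
    (hf.comp measurable_fst).mul (hg.comp measurable_snd)
  have hgf : Measurable fun p : X × X => g p.1 * f p.2 :=
    (hg.comp measurable_fst).mul (hf.comp measurable_snd)
  calc ∫⁻ x, f x * kernelLIntegral P g x ∂π
      = ∫⁻ p, f p.1 * g p.2 ∂(π ⊗ₘ P) := by
        simp_rw [Measure.lintegral_compProd hfg, kernelLIntegral, lintegral_const_mul _ hg]
    _ = ∫⁻ p, g p.1 * f p.2 ∂(π ⊗ₘ P) := by
        conv_lhs => rw [← hrev, lintegral_map hfg measurable_swap]
        simp only [Prod.fst_swap, Prod.snd_swap, mul_comm]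
    _ = ∫⁻ x, g x * kernelLIntegral P f x ∂π := by
        simp_rw [Measure.lintegral_compProd hgf, kernelLIntegral, lintegral_const_mul _ hf]

lemma lintegral_kernelLIntegral [IsMarkovKernel P] [SFinite π]
    (hrev : (π ⊗ₘ P).map Prod.swap = π ⊗ₘ P)
    {g : X → ℝ≥0∞} (hg : Measurable g) :
    ∫⁻ x, kernelLIntegral P g x ∂π = ∫⁻ x, g x ∂π := by
  simpa [kernelLIntegral] using lintegral_mul_kernelLIntegral_comm hrev measurable_one hg

lemma kernelApply_withDensity [IsSFiniteKernel P] [SFinite π]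
    (hrev : (π ⊗ₘ P).map Prod.swap = π ⊗ₘ P)
    {g : X → ℝ≥0∞} (hg : Measurable g) :
    kernelApply P (π.withDensity g) = π.withDensity (kernelLIntegral P g) := by
  ext B hB
  have h := lintegral_mul_kernelLIntegral_comm hrev hg (measurable_one.indicator hB)
  simp only [kernelLIntegral, lintegral_indicator_one hB] at h
  rw [kernelApply_apply P _ hB, withDensity_apply _ hB,
    lintegral_withDensity_eq_lintegral_mul _ hg (P.measurable_coe hB), ← lintegral_indicator hB]
  refine h.trans (lintegral_congr fun x => ?_)
  by_cases hx : x ∈ B <;> simp [hx, kernelLIntegral]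

lemma kernelIter_withDensity [IsSFiniteKernel P] [SFinite π]
    (hrev : (π ⊗ₘ P).map Prod.swap = π ⊗ₘ P) {g : X → ℝ≥0∞} (hg : Measurable g) (k : ℕ) :
    kernelIter P k (π.withDensity g) = π.withDensity ((kernelLIntegral P)^[k] g) := by
  induction k with
  | zero => rfl
  | succ k ih =>
    rw [kernelIter_succ, ih,
      kernelApply_withDensity hrev (measurable_iterate_kernelLIntegral P hg k),
      Function.iterate_succ_apply']

lemma lintegral_iterate_kernelLIntegral [IsMarkovKernel P] [SFinite π]
    (hrev : (π ⊗ₘ P).map Prod.swap = π ⊗ₘ P) {g : X → ℝ≥0∞} (hg : Measurable g) (k : ℕ) :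
    ∫⁻ x, (kernelLIntegral P)^[k] g x ∂π = ∫⁻ x, g x ∂π := by
  induction k with
  | zero => rfl
  | succ k ih =>
    rw [Function.iterate_succ_apply',
      lintegral_kernelLIntegral hrev (measurable_iterate_kernelLIntegral P hg k), ih]

lemma lintegral_kernelLIntegral_sq_le [IsMarkovKernel P] [SFinite π]
    (hrev : (π ⊗ₘ P).map Prod.swap = π ⊗ₘ P) {g : X → ℝ≥0∞} (hg : Measurable g) :
    ∫⁻ x, kernelLIntegral P g x ^ 2 ∂π ≤ ∫⁻ x, g x ^ 2 ∂π :=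
  (lintegral_mono fun _ => sq_lintegral_le_lintegral_sq hg.aemeasurable).trans_eq
    (lintegral_kernelLIntegral hrev (hg.pow_const 2))

lemma lintegral_iterate_kernelLIntegral_sq_le [IsMarkovKernel P] [SFinite π]
    (hrev : (π ⊗ₘ P).map Prod.swap = π ⊗ₘ P) {g : X → ℝ≥0∞} (hg : Measurable g) (k : ℕ) :
    ∫⁻ x, (kernelLIntegral P)^[k] g x ^ 2 ∂π ≤ ∫⁻ x, g x ^ 2 ∂π := by
  induction k with
  | zero => rfl
  | succ k ih =>
    rw [Function.iterate_succ_apply']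
    exact (lintegral_kernelLIntegral_sq_le hrev (measurable_iterate_kernelLIntegral P hg k)).trans
      ih

lemma ae_kernelLIntegral_lt_top [IsMarkovKernel P] [SFinite π]
    (hrev : (π ⊗ₘ P).map Prod.swap = π ⊗ₘ P) {g : X → ℝ≥0∞} (hg : Measurable g)
    (hfin : ∫⁻ x, g x ∂π ≠ ∞) : ∀ᵐ x ∂π, kernelLIntegral P g x < ∞ :=
  ae_lt_top (measurable_kernelLIntegral P hg) (by rwa [lintegral_kernelLIntegral hrev hg])

def ContractsMeanZeroL2 (P : Kernel X X) (π : Measure X) (c : ℝ) : Prop :=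
  ∀ f : X → ℝ, MemLp f 2 π → ∫ x, f x ∂π = 0 →
    Real.sqrt (∫ x, (∫ y, f y ∂(P x)) ^ 2 ∂π) ≤ c * Real.sqrt (∫ x, (f x) ^ 2 ∂π)

lemma sqrt_integral_kernelLIntegral_sub_one_sq_le [IsMarkovKernel P] [IsProbabilityMeasure π]
    (hrev : (π ⊗ₘ P).map Prod.swap = π ⊗ₘ P) {c : ℝ} (hP : ContractsMeanZeroL2 P π c)
    {g : X → ℝ≥0∞} (hg : Measurable g) (hmass : ∫⁻ x, g x ∂π = 1)
    (hsq : ∫⁻ x, g x ^ 2 ∂π ≠ ∞) :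
    Real.sqrt (∫ x, ((kernelLIntegral P g x).toReal - 1) ^ 2 ∂π) ≤
      c * Real.sqrt (∫ x, ((g x).toReal - 1) ^ 2 ∂π) := by
  have hfin : ∀ᵐ x ∂π, g x < ∞ := ae_lt_top hg (hmass ▸ ENNReal.one_ne_top)
  have hgL2 : MemLp (fun x => (g x).toReal) 2 π :=
    (memLp_two_toReal_iff hg.aemeasurable (hfin.mono fun _ => ne_of_lt)).2 hsq
  have hmean : ∫ x, ((g x).toReal - 1) ∂π = 0 := by
    rw [integral_sub (hgL2.integrable one_le_two) (integrable_const 1),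
      integral_toReal hg.aemeasurable hfin, hmass]
    simp
  have hstep : (fun x => (∫ y, ((g y).toReal - 1) ∂P x) ^ 2) =ᵐ[π]
      fun x => ((kernelLIntegral P g x).toReal - 1) ^ 2 := by
    filter_upwards [ae_kernelLIntegral_lt_top hrev hg (hmass ▸ ENNReal.one_ne_top)] with x hx
    rw [integral_sub (integrable_toReal_of_lintegral_ne_top hg.aemeasurable hx.ne)
      (integrable_const 1), integral_toReal hg.aemeasurable (ae_lt_top hg hx.ne)]
    simp [kernelLIntegral]
  rw [← integral_congr_ae hstep]
  exact hP _ (hgL2.sub (memLp_const 1)) hmean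

lemma sqrt_integral_iterate_kernelLIntegral_sub_one_sq_le [IsMarkovKernel P]
    [IsProbabilityMeasure π] (hrev : (π ⊗ₘ P).map Prod.swap = π ⊗ₘ P) {c : ℝ} (hc : 0 ≤ c)
    (hP : ContractsMeanZeroL2 P π c) {g : X → ℝ≥0∞} (hg : Measurable g)
    (hmass : ∫⁻ x, g x ∂π = 1) (hsq : ∫⁻ x, g x ^ 2 ∂π ≠ ∞) (k : ℕ) :
    Real.sqrt (∫ x, (((kernelLIntegral P)^[k] g x).toReal - 1) ^ 2 ∂π) ≤
      c ^ k * Real.sqrt (∫ x, ((g x).toReal - 1) ^ 2 ∂π) := by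
  induction k with
  | zero => simp
  | succ k ih =>
    rw [Function.iterate_succ_apply', pow_succ', mul_assoc]
    refine (sqrt_integral_kernelLIntegral_sub_one_sq_le hrev hP
      (measurable_iterate_kernelLIntegral P hg k)
      (by rw [lintegral_iterate_kernelLIntegral hrev hg k, hmass])
      (ne_top_of_le_ne_top hsq (lintegral_iterate_kernelLIntegral_sq_le hrev hg k))).trans ?_
    exact mul_le_mul_of_nonneg_left ih hc

lemma tvDist_kernelIter_withDensity_le [IsMarkovKernel P] [IsProbabilityMeasure π]
    (hrev : (π ⊗ₘ P).map Prod.swap = π ⊗ₘ P) {c : ℝ} (hc : 0 ≤ c)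
    (hP : ContractsMeanZeroL2 P π c) {g : X → ℝ≥0∞} (hg : Measurable g)
    (hmass : ∫⁻ x, g x ∂π = 1) (hsq : ∫⁻ x, g x ^ 2 ∂π ≠ ∞) (k : ℕ) :
    tvDist (kernelIter P k (π.withDensity g)) π ≤
      c ^ k * Real.sqrt (∫ x, ((g x).toReal - 1) ^ 2 ∂π) := by
  set h := (kernelLIntegral P)^[k] g
  have hh : Measurable h := measurable_iterate_kernelLIntegral P hg k
  have hhmass : ∫⁻ x, h x ∂π = 1 := (lintegral_iterate_kernelLIntegral hrev hg k).trans hmass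
  have hhsq : ∫⁻ x, h x ^ 2 ∂π ≠ ∞ :=
    ne_top_of_le_ne_top hsq (lintegral_iterate_kernelLIntegral_sq_le hrev hg k)
  have hhL2 : MemLp (fun x => (h x).toReal) 2 π :=
    (memLp_two_toReal_iff hh.aemeasurable
      (ae_lt_top hh (hhmass ▸ ENNReal.one_ne_top) |>.mono fun _ => ne_of_lt)).2 hhsq
  rw [kernelIter_withDensity hrev hg k]
  calc tvDist (π.withDensity h) π ≤ ∫ x, |(h x).toReal - 1| ∂π :=
        tvDist_withDensity_le_integral_abs π hh (hhmass ▸ ENNReal.one_ne_top)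
    _ ≤ Real.sqrt (∫ x, ((h x).toReal - 1) ^ 2 ∂π) :=
        integral_abs_le_sqrt_integral_sq (hhL2.sub (memLp_const 1))
    _ ≤ c ^ k * Real.sqrt (∫ x, ((g x).toReal - 1) ^ 2 ∂π) :=
        sqrt_integral_iterate_kernelLIntegral_sub_one_sq_le hrev hc hP hg hmass hsq k

lemma tvDist_kernelIter_le_of_rnDeriv [IsMarkovKernel P] [IsProbabilityMeasure π]
    (hrev : (π ⊗ₘ P).map Prod.swap = π ⊗ₘ P) {c : ℝ} (hc : 0 ≤ c)
    (hP : ContractsMeanZeroL2 P π c) {μ : Measure X} [IsProbabilityMeasure μ] (hμ : μ ≪ π)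
    (hL2 : MemLp (fun x => (μ.rnDeriv π x).toReal) 2 π) (k : ℕ) :
    tvDist (kernelIter P k μ) π ≤ c ^ k * Real.sqrt (∫ x, ((μ.rnDeriv π x).toReal) ^ 2 ∂π) := by
  have hg : Measurable (μ.rnDeriv π) := Measure.measurable_rnDeriv μ π
  have hmass : ∫⁻ x, μ.rnDeriv π x ∂π = 1 := by
    rw [Measure.lintegral_rnDeriv hμ, measure_univ]
  have hsq : ∫⁻ x, μ.rnDeriv π x ^ 2 ∂π ≠ ∞ :=
    (memLp_two_toReal_iff hg.aemeasurable
      ((Measure.rnDeriv_lt_top μ π).mono fun _ => ne_of_lt)).1 hL2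
  have hmean : ∫ x, (μ.rnDeriv π x).toReal ∂π = 1 := by
    rw [Measure.integral_toReal_rnDeriv hμ, probReal_univ]
  calc tvDist (kernelIter P k μ) π
      = tvDist (kernelIter P k (π.withDensity (μ.rnDeriv π))) π := by
        rw [Measure.withDensity_rnDeriv_eq μ π hμ]
    _ ≤ c ^ k * Real.sqrt (∫ x, ((μ.rnDeriv π x).toReal - 1) ^ 2 ∂π) :=
        tvDist_kernelIter_withDensity_le hrev hc hP hg hmass hsq k
    _ ≤ c ^ k * Real.sqrt (∫ x, ((μ.rnDeriv π x).toReal) ^ 2 ∂π) := by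
        gcongr c ^ k * Real.sqrt ?_
        exact hmean ▸ integral_sub_integral_sq_le hL2

end Reversible

lemma one_sub_pow_mul_le_of_log_div_le {Δ a ε : ℝ} {τ : ℕ} (hΔ0 : 0 < Δ) (hΔ1 : Δ ≤ 1)
    (ha : 0 ≤ a) (hε : 0 < ε) (hτ : 1 / Δ * Real.log (a / ε) ≤ τ) :
    (1 - Δ) ^ τ * a ≤ ε := by
  rcases ha.eq_or_lt with rfl | ha
  · simpa using hε.le
  have hlog : Real.log (a / ε) ≤ Δ * τ := by
    rw [one_div_mul_eq_div, div_le_iff₀ hΔ0] at hτ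
    linarith
  calc (1 - Δ) ^ τ * a ≤ Real.exp (-Δ) ^ τ * a := by
        gcongr; linarith [Real.add_one_le_exp (-Δ)]
    _ = Real.exp (-(Δ * τ)) * a := by rw [← Real.exp_nat_mul]; ring_nf
    _ ≤ Real.exp (-Real.log (a / ε)) * a := by gcongr
    _ = ε := by
        rw [Real.exp_neg, Real.exp_log (div_pos ha hε)]
        field_simp

theorem tv_tracking_general
    {d : ℕ}
    (μ μ' : Measure (EuclideanSpace ℝ (Fin d)))
    [IsProbabilityMeasure μ] [IsProbabilityMeasure μ']
    (hacc : μ ≪ μ')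
    (hα : MemLp (fun x => (μ.rnDeriv μ' x).toReal) 2 μ')
    (P : Kernel (EuclideanSpace ℝ (Fin d)) (EuclideanSpace ℝ (Fin d)))
    [IsMarkovKernel P]
    (hrev : (μ' ⊗ₘ P).map Prod.swap = μ' ⊗ₘ P)
    (Δ : ℝ) (hΔ0 : 0 < Δ) (hΔ1 : Δ < 1)
    (hcontract : ∀ f : EuclideanSpace ℝ (Fin d) → ℝ, MemLp f 2 μ' →
      (∫ x, f x ∂μ') = 0 →
      Real.sqrt (∫ x, (∫ y, f y ∂(P x)) ^ 2 ∂μ') ≤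
        (1 - Δ) * Real.sqrt (∫ x, (f x) ^ 2 ∂μ'))
    (ε : ℝ) (hε : 0 < ε) (τ : ℕ)
    (hτ : (1 / Δ) *
        Real.log (Real.sqrt (∫ x, ((μ.rnDeriv μ' x).toReal) ^ 2 ∂μ') / ε) ≤ (τ : ℝ))
    (σ : Measure (EuclideanSpace ℝ (Fin d))) [IsProbabilityMeasure σ] :
    tvDist (kernelIter P τ σ) μ' ≤ tvDist σ μ + ε :=
  calc tvDist (kernelIter P τ σ) μ'
      ≤ tvDist (kernelIter P τ σ) (kernelIter P τ μ) + tvDist (kernelIter P τ μ) μ' :=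
        tvDist_triangle _ _ _
    _ ≤ tvDist σ μ + (1 - Δ) ^ τ * Real.sqrt (∫ x, ((μ.rnDeriv μ' x).toReal) ^ 2 ∂μ') :=
        add_le_add (tvDist_kernelIter_le P τ σ μ)
          (tvDist_kernelIter_le_of_rnDeriv hrev (by linarith) hcontract hacc hα τ)
    _ ≤ tvDist σ μ + ε := by
        gcongr
        exact one_sub_pow_mul_le_of_log_div_le hΔ0 hΔ1.le (Real.sqrt_nonneg _) hε hτ

/-- if `μ ≪ μ'` with `α = ‖dμ/dμ'‖_{L²(μ')} < ∞`, `P` is a Markov kernel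
reversible w.r.t. `μ'` contracting mean-zero functions in `L²(μ')` by `1 − Δ`, `ε > 0`
and `τ ≥ (1/Δ)·log(α/ε)`, then for every probability measure `σ` on `K`,
`d_TV(σP^τ, μ') ≤ d_TV(σ, μ) + ε`. -/
theorem tv_tracking
    {d : ℕ} (K : Set (EuclideanSpace ℝ (Fin d)))
    (hKcomp : IsCompact K) (hKconv : Convex ℝ K) (hKint : (interior K).Nonempty)
    (μ μ' : Measure (EuclideanSpace ℝ (Fin d)))
    [IsProbabilityMeasure μ] [IsProbabilityMeasure μ']
    (hμK : μ Kᶜ = 0) (hμ'K : μ' Kᶜ = 0)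
    (hacc : μ ≪ μ')
    (hα : MemLp (fun x => (μ.rnDeriv μ' x).toReal) 2 μ')
    (P : Kernel (EuclideanSpace ℝ (Fin d)) (EuclideanSpace ℝ (Fin d)))
    [IsMarkovKernel P]
    (hPsupp : ∀ x ∈ K, (P x) Kᶜ = 0)
    (hrev : (μ' ⊗ₘ P).map Prod.swap = μ' ⊗ₘ P)
    (Δ : ℝ) (hΔ0 : 0 < Δ) (hΔ1 : Δ < 1)
    (hcontract : ∀ f : EuclideanSpace ℝ (Fin d) → ℝ, MemLp f 2 μ' →
      (∫ x, f x ∂μ') = 0 →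
      Real.sqrt (∫ x, (∫ y, f y ∂(P x)) ^ 2 ∂μ') ≤
        (1 - Δ) * Real.sqrt (∫ x, (f x) ^ 2 ∂μ'))
    (ε : ℝ) (hε : 0 < ε) (τ : ℕ)
    (hτ : (1 / Δ) *
        Real.log (Real.sqrt (∫ x, ((μ.rnDeriv μ' x).toReal) ^ 2 ∂μ') / ε) ≤ (τ : ℝ))
    (σ : Measure (EuclideanSpace ℝ (Fin d))) [IsProbabilityMeasure σ] (hσK : σ Kᶜ = 0) :
    tvDist (kernelIter P τ σ) μ' ≤ tvDist σ μ + ε :=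
  tv_tracking_general μ μ' hacc hα P hrev Δ hΔ0 hΔ1 hcontract ε hε τ hτ σ
end

section
/- Let p_U be any probability measure on K absolutely continuous with respect to μ_0 with D(p_U‖μ_0) < ∞. Then the expected regret of the exponential-weights mixed strategies satisfies the exact identity: Σ_{t=1}^T ∫_K ℓ_t dμ_{t−1} − Σ_{t=1}^T ∫_K ℓ_t dp_U = η^{−1}·(D(p_U‖μ_0) − D(p_U‖μ_T)) + η^{−1}·Σ_{t=1}^T D(μ_{t−1}‖μ_t). -/
open MeasureTheory

/-- The probability measure on `K` with density `e^{-g(x)} / ∫_K e^{-g}` with respect to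
Lebesgue measure. -/
noncomputable def gibbsMeasure {d : ℕ} (K : Set (EuclideanSpace ℝ (Fin d)))
    (g : EuclideanSpace ℝ (Fin d) → ℝ) : Measure (EuclideanSpace ℝ (Fin d)) :=
  (volume.restrict K).withDensity
    (fun x => ENNReal.ofReal (Real.exp (-g x) / ∫ y in K, Real.exp (-g y)))

/-- The exponential-weights mixed strategy at time `t`: the probability measure on `K`
with density proportional to `exp(−(η·Σ_{s=1}^t ℓ_s(x) + R(x)))`. -/
noncomputable def ewMeasure {d : ℕ} (K : Set (EuclideanSpace ℝ (Fin d)))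
    (ℓ : ℕ → EuclideanSpace ℝ (Fin d) → ℝ) (R : EuclideanSpace ℝ (Fin d) → ℝ)
    (η : ℝ) (t : ℕ) : Measure (EuclideanSpace ℝ (Fin d)) :=
  gibbsMeasure K (fun x => η * ∑ i ∈ Finset.Icc 1 t, ℓ i x + R x)

/-- Kullback–Leibler divergence `D(p‖q) = ∫ log (dp/dq) dp`. -/
noncomputable def klDiv' {α : Type*} [MeasurableSpace α] (p q : Measure α) : ℝ :=
  ∫ x, Real.log ((p.rnDeriv q x).toReal) ∂p

/-!
Exponential weights are iterated exponential tilts: `μ_t = μ_{t-1}.tilted (-η ℓ_t)`. For a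
single tilt `μ ↦ μ^f` and any `p ≪ μ`, the Gibbs variational formula
`D(p‖μ^f) = D(p‖μ) - ∫ f dp + log ∫ e^f dμ`, applied once to `p` and once to `μ` itself, gives
the three-point identity `∫ f dμ - ∫ f dp = D(p‖μ^f) - D(p‖μ) - D(μ‖μ^f)`, in which the
log-partition function cancels. With `f = -η ℓ_t` and `μ = μ_{t-1}` these identities telescope.
-/

open Real

section Tilted

variable {α : Type*} {mα : MeasurableSpace α} {μ ν p : Measure α} {f g : α → ℝ}

lemma klDiv'_eq_integral_llr (p q : Measure α) : klDiv' p q = ∫ x, llr p q x ∂p := rfl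

lemma integrable_and_integrable_exp_of_ae_abs_le [IsFiniteMeasure μ] (hμν : μ ≪ ν)
    (hg : AEStronglyMeasurable g ν) (hbdd : ∃ C, ∀ᵐ x ∂ν, |g x| ≤ C) :
    Integrable g μ ∧ Integrable (fun x => exp (g x)) μ := by
  obtain ⟨C, hC⟩ := hbdd
  refine ⟨.of_bound (hg.mono_ac hμν) C (hμν.ae_le hC),
    .of_bound ((continuous_exp.comp_aestronglyMeasurable hg).mono_ac hμν) (exp C) ?_⟩
  filter_upwards [hμν.ae_le hC] with x hx
  rw [Real.norm_eq_abs, abs_of_pos (exp_pos _)]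
  exact exp_le_exp.2 (abs_le.1 hx).2

lemma klDiv'_tilted_self [IsProbabilityMeasure μ] (hf : Integrable f μ)
    (hexp : Integrable (fun x => exp (f x)) μ) :
    klDiv' μ (μ.tilted f) = log (∫ x, exp (f x) ∂μ) - ∫ x, f x ∂μ := by
  have hllr : Integrable (llr μ μ) μ := (integrable_congr (llr_self μ)).2 (integrable_zero _ _ _)
  rw [klDiv'_eq_integral_llr, integral_llr_tilted_right .rfl hf hexp hllr,
    integral_congr_ae (llr_self μ)]
  simp only [Pi.zero_apply, integral_zero]
  ring

lemma integral_sub_integral_eq_klDiv'_tilted [IsProbabilityMeasure μ] [IsProbabilityMeasure p]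
    (hpμ : p ≪ μ) (hllr : Integrable (llr p μ) p) (hfμ : Integrable f μ) (hfp : Integrable f p)
    (hexp : Integrable (fun x => exp (f x)) μ) :
    ∫ x, f x ∂μ - ∫ x, f x ∂p = klDiv' p (μ.tilted f) - klDiv' p μ - klDiv' μ (μ.tilted f) := by
  rw [klDiv'_tilted_self hfμ hexp, klDiv'_eq_integral_llr, klDiv'_eq_integral_llr,
    integral_llr_tilted_right hpμ hfp hexp hllr]
  ring

end Tilted

noncomputable def tiltSeq {α : Type*} [MeasurableSpace α] (μ₀ : Measure α) (f : ℕ → α → ℝ) :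
    ℕ → Measure α
  | 0 => μ₀
  | t + 1 => (tiltSeq μ₀ f t).tilted (f (t + 1))

section TiltSeq

variable {α : Type*} {mα : MeasurableSpace α} {μ₀ p : Measure α} {f : ℕ → α → ℝ}

lemma tiltSeq_absolutelyContinuous : ∀ t, tiltSeq μ₀ f t ≪ μ₀
  | 0 => .rfl
  | t + 1 => (tilted_absolutelyContinuous _ _).trans (tiltSeq_absolutelyContinuous t)

lemma isProbabilityMeasure_tiltSeq [IsProbabilityMeasure μ₀]
    (hf : ∀ t, AEStronglyMeasurable (f t) μ₀) (hbdd : ∀ t, ∃ C, ∀ᵐ x ∂μ₀, |f t x| ≤ C) :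
    ∀ t, IsProbabilityMeasure (tiltSeq μ₀ f t)
  | 0 => ‹_›
  | t + 1 =>
    have := isProbabilityMeasure_tiltSeq hf hbdd t
    isProbabilityMeasure_tilted (integrable_and_integrable_exp_of_ae_abs_le
      (tiltSeq_absolutelyContinuous t) (hf _) (hbdd _)).2

lemma absolutelyContinuous_tiltSeq [IsProbabilityMeasure μ₀]
    (hf : ∀ t, AEStronglyMeasurable (f t) μ₀) (hbdd : ∀ t, ∃ C, ∀ᵐ x ∂μ₀, |f t x| ≤ C) :
    ∀ t, μ₀ ≪ tiltSeq μ₀ f t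
  | 0 => .rfl
  | t + 1 =>
    have := isProbabilityMeasure_tiltSeq hf hbdd t
    (absolutelyContinuous_tiltSeq hf hbdd t).trans <| absolutelyContinuous_tilted
      (integrable_and_integrable_exp_of_ae_abs_le
        (tiltSeq_absolutelyContinuous t) (hf _) (hbdd _)).2

lemma integrable_llr_tiltSeq [IsProbabilityMeasure μ₀] [IsProbabilityMeasure p]
    (hf : ∀ t, AEStronglyMeasurable (f t) μ₀) (hbdd : ∀ t, ∃ C, ∀ᵐ x ∂μ₀, |f t x| ≤ C)
    (hp : p ≪ μ₀) (hllr : Integrable (llr p μ₀) p) :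
    ∀ t, Integrable (llr p (tiltSeq μ₀ f t)) p
  | 0 => hllr
  | t + 1 =>
    have := isProbabilityMeasure_tiltSeq hf hbdd t
    integrable_llr_tilted_right (hp.trans (absolutelyContinuous_tiltSeq hf hbdd t))
      (integrable_and_integrable_exp_of_ae_abs_le hp (hf _) (hbdd _)).1
      (integrable_llr_tiltSeq hf hbdd hp hllr t)
      (integrable_and_integrable_exp_of_ae_abs_le
        (tiltSeq_absolutelyContinuous t) (hf _) (hbdd _)).2

theorem sum_integral_sub_integral_tiltSeq [IsProbabilityMeasure μ₀] [IsProbabilityMeasure p]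
    (hf : ∀ t, AEStronglyMeasurable (f t) μ₀) (hbdd : ∀ t, ∃ C, ∀ᵐ x ∂μ₀, |f t x| ≤ C)
    (hp : p ≪ μ₀) (hllr : Integrable (llr p μ₀) p) (T : ℕ) :
    ∑ t ∈ Finset.Icc 1 T, (∫ x, f t x ∂(tiltSeq μ₀ f (t - 1)) - ∫ x, f t x ∂p) =
      klDiv' p (tiltSeq μ₀ f T) - klDiv' p μ₀ -
        ∑ t ∈ Finset.Icc 1 T, klDiv' (tiltSeq μ₀ f (t - 1)) (tiltSeq μ₀ f t) := by
  induction T with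
  | zero => simp [tiltSeq]
  | succ T ih =>
    have := isProbabilityMeasure_tiltSeq hf hbdd T
    have hμT := integrable_and_integrable_exp_of_ae_abs_le
      (tiltSeq_absolutelyContinuous (f := f) T) (hf (T + 1)) (hbdd (T + 1))
    have step := integral_sub_integral_eq_klDiv'_tilted
      (hp.trans (absolutelyContinuous_tiltSeq hf hbdd T))
      (integrable_llr_tiltSeq hf hbdd hp hllr T) hμT.1
      (integrable_and_integrable_exp_of_ae_abs_le hp (hf _) (hbdd _)).1 hμT.2
    rw [Finset.sum_Icc_succ_top (by omega), Finset.sum_Icc_succ_top (by omega), ih,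
      Nat.add_sub_cancel, step, tiltSeq]
    ring

end TiltSeq

lemma exists_forall_abs_mul_sum_add_le {β : Type*} {s : Set β} {ℓ : ℕ → β → ℝ} {R : β → ℝ}
    (hℓ : ∀ i, ∃ C, ∀ x ∈ s, |ℓ i x| ≤ C) (hR : ∃ C, ∀ x ∈ s, |R x| ≤ C) (η : ℝ)
    (I : Finset ℕ) : ∃ C, ∀ x ∈ s, |η * ∑ i ∈ I, ℓ i x + R x| ≤ C := by
  choose Cℓ hCℓ using hℓ
  obtain ⟨CR, hCR⟩ := hR
  refine ⟨|η| * ∑ i ∈ I, Cℓ i + CR, fun x hx =>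
    (abs_add_le _ _).trans (add_le_add ?_ (hCR x hx))⟩
  rw [abs_mul]
  exact mul_le_mul_of_nonneg_left ((Finset.abs_sum_le_sum_abs _ _).trans
    (Finset.sum_le_sum fun i _ => hCℓ i x hx)) (abs_nonneg η)

section ExpWeights

variable {d : ℕ} {K : Set (EuclideanSpace ℝ (Fin d))} {ℓ : ℕ → EuclideanSpace ℝ (Fin d) → ℝ}
  {R : EuclideanSpace ℝ (Fin d) → ℝ} {η : ℝ}

lemma ewMeasure_eq_tilted (t : ℕ) :
    ewMeasure K ℓ R η t =
      (volume.restrict K).tilted fun x => -(η * ∑ i ∈ Finset.Icc 1 t, ℓ i x + R x) := rfl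

lemma ewMeasure_succ {t : ℕ}
    (hexp : Integrable (fun x => exp (-(η * ∑ i ∈ Finset.Icc 1 t, ℓ i x + R x)))
      (volume.restrict K)) :
    ewMeasure K ℓ R η (t + 1) = (ewMeasure K ℓ R η t).tilted fun x => -(η * ℓ (t + 1) x) := by
  rw [ewMeasure_eq_tilted, ewMeasure_eq_tilted, tilted_tilted hexp]
  congr 1
  funext x
  rw [Pi.add_apply, Finset.sum_Icc_succ_top (by omega)]
  ring

lemma ewMeasure_eq_tiltSeq
    (hexp : ∀ t, Integrable (fun x => exp (-(η * ∑ i ∈ Finset.Icc 1 t, ℓ i x + R x)))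
      (volume.restrict K)) :
    ∀ t, ewMeasure K ℓ R η t = tiltSeq (ewMeasure K ℓ R η 0) (fun t x => -(η * ℓ t x)) t
  | 0 => rfl
  | t + 1 => by rw [ewMeasure_succ (hexp t), ewMeasure_eq_tiltSeq hexp t, tiltSeq]

end ExpWeights

theorem exp_weights_regret_identity_general
    {d : ℕ} (T : ℕ) (K : Set (EuclideanSpace ℝ (Fin d)))
    (hKcomp : IsCompact K)
    (hKpos : 0 < volume K)
    (ℓ : ℕ → EuclideanSpace ℝ (Fin d) → ℝ) (R : EuclideanSpace ℝ (Fin d) → ℝ)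
    (hℓmeas : ∀ t, Measurable (ℓ t)) (hRmeas : Measurable R)
    (hℓbdd : ∀ t, ∃ C, ∀ x ∈ K, |ℓ t x| ≤ C) (hRbdd : ∃ C, ∀ x ∈ K, |R x| ≤ C)
    (η : ℝ) (hη : 0 < η)
    (pU : Measure (EuclideanSpace ℝ (Fin d))) [IsProbabilityMeasure pU]
    (hpUac : pU ≪ ewMeasure K ℓ R η 0)
    (hKLfin : Integrable
      (fun x => Real.log ((pU.rnDeriv (ewMeasure K ℓ R η 0) x).toReal)) pU) :
    (∑ t ∈ Finset.Icc 1 T, ∫ x, ℓ t x ∂(ewMeasure K ℓ R η (t - 1))) -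
        (∑ t ∈ Finset.Icc 1 T, ∫ x, ℓ t x ∂pU) =
      η⁻¹ * (klDiv' pU (ewMeasure K ℓ R η 0) - klDiv' pU (ewMeasure K ℓ R η T)) +
        η⁻¹ * ∑ t ∈ Finset.Icc 1 T, klDiv' (ewMeasure K ℓ R η (t - 1)) (ewMeasure K ℓ R η t) := by
  have : IsFiniteMeasure (volume.restrict K) :=
    isFiniteMeasure_restrict.2 hKcomp.measure_lt_top.ne
  have : NeZero (volume.restrict K) := ⟨by simpa [Measure.restrict_eq_zero] using hKpos.ne'⟩
  have hinK : ∀ᵐ x ∂(volume.restrict K), x ∈ K := ae_restrict_mem hKcomp.measurableSet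
  have hexp (t : ℕ) : Integrable (fun x => exp (-(η * ∑ i ∈ Finset.Icc 1 t, ℓ i x + R x)))
      (volume.restrict K) := by
    obtain ⟨C, hC⟩ := exists_forall_abs_mul_sum_add_le hℓbdd hRbdd η (Finset.Icc 1 t)
    refine (integrable_and_integrable_exp_of_ae_abs_le .rfl (by fun_prop) ⟨C, ?_⟩).2
    filter_upwards [hinK] with x hx
    simpa only [abs_neg] using hC x hx
  have : IsProbabilityMeasure (ewMeasure K ℓ R η 0) := isProbabilityMeasure_tilted (hexp 0)
  have hloss (t : ℕ) : ∃ C, ∀ᵐ x ∂(ewMeasure K ℓ R η 0), |-(η * ℓ t x)| ≤ C := by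
    obtain ⟨C, hC⟩ := hℓbdd t
    refine ⟨|η| * C, (tilted_absolutelyContinuous _ _).ae_le ?_⟩
    filter_upwards [hinK] with x hx
    rw [abs_neg, abs_mul]
    exact mul_le_mul_of_nonneg_left (hC x hx) (abs_nonneg η)
  have key := sum_integral_sub_integral_tiltSeq (f := fun t x => -(η * ℓ t x))
    (fun t => ((hℓmeas t).const_mul η).neg.aestronglyMeasurable) hloss hpUac hKLfin T
  simp only [← ewMeasure_eq_tiltSeq hexp, integral_neg, integral_const_mul, neg_sub_neg,
    ← mul_sub, ← Finset.mul_sum, Finset.sum_sub_distrib] at key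
  field_simp
  linarith

/-- exact regret identity for the exponential-weights mixed strategies:
`Σ_t ∫ ℓ_t dμ_{t−1} − Σ_t ∫ ℓ_t dp_U
  = η⁻¹·(D(p_U‖μ_0) − D(p_U‖μ_T)) + η⁻¹·Σ_t D(μ_{t−1}‖μ_t)`. -/
theorem exp_weights_regret_identity
    {d : ℕ} (T : ℕ) (K : Set (EuclideanSpace ℝ (Fin d)))
    (hKcomp : IsCompact K) (hKconv : Convex ℝ K) (hKint : (interior K).Nonempty)
    (hKpos : 0 < volume K)
    (ℓ : ℕ → EuclideanSpace ℝ (Fin d) → ℝ) (R : EuclideanSpace ℝ (Fin d) → ℝ)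
    (hℓmeas : ∀ t, Measurable (ℓ t)) (hRmeas : Measurable R)
    (hℓbdd : ∀ t, ∃ C, ∀ x ∈ K, |ℓ t x| ≤ C) (hRbdd : ∃ C, ∀ x ∈ K, |R x| ≤ C)
    (η : ℝ) (hη : 0 < η)
    (pU : Measure (EuclideanSpace ℝ (Fin d))) [IsProbabilityMeasure pU]
    (hpUK : pU Kᶜ = 0)
    (hpUac : pU ≪ ewMeasure K ℓ R η 0)
    (hKLfin : Integrable
      (fun x => Real.log ((pU.rnDeriv (ewMeasure K ℓ R η 0) x).toReal)) pU) :
    (∑ t ∈ Finset.Icc 1 T, ∫ x, ℓ t x ∂(ewMeasure K ℓ R η (t - 1))) -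
        (∑ t ∈ Finset.Icc 1 T, ∫ x, ℓ t x ∂pU) =
      η⁻¹ * (klDiv' pU (ewMeasure K ℓ R η 0) - klDiv' pU (ewMeasure K ℓ R η T)) +
        η⁻¹ * ∑ t ∈ Finset.Icc 1 T, klDiv' (ewMeasure K ℓ R η (t - 1)) (ewMeasure K ℓ R η t) :=
  exp_weights_regret_identity_general T K hKcomp hKpos ℓ R hℓmeas hRmeas hℓbdd hRbdd η hη pU hpUac
    hKLfin
end

section
/- Let c, c' ∈ ℝ^d and let μ and μ' be the probability measures on K with densities proportional to exp(−‖x − c‖²/2) and exp(−‖x − c'‖²/2) with respect to Lebesgue measure, respectively. Then for every x ∈ K, both density ratios satisfy max((dμ/dμ')(x), (dμ'/dμ)(x)) ≤ exp(sup_{y∈K} ‖c − c'‖·‖2y − c − c'‖), where ‖·‖ is the Euclidean norm. -/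
open MeasureTheory

/-!
Expanding the squares, `‖y - c'‖² - ‖y - c‖² = ⟪c - c', 2y - c - c'⟫`, so by Cauchy–Schwarz the two
unnormalized densities are within a factor `exp (S / 2)` of each other on `K`, where `S` is the
supremum in the statement. Integrating over `K` gives the same factor between the normalizing
constants, and the two factors multiply to `exp S`.
-/

section NormalizedRatio

variable {α : Type*} [MeasurableSpace α] {μ : Measure α} {s : Set α} {f g : α → ℝ} {r : ℝ}

theorem setIntegral_le_mul_setIntegral (hs : MeasurableSet s) (hf : IntegrableOn f s μ)
    (hg : IntegrableOn g s μ) (hfg : ∀ y ∈ s, f y ≤ r * g y) :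
    ∫ y in s, f y ∂μ ≤ r * ∫ y in s, g y ∂μ := by
  rw [← integral_const_mul]
  exact setIntegral_mono_on hf (hg.const_mul r) hs hfg

theorem normalized_ratio_le_sq (hs : MeasurableSet s) (hf : IntegrableOn f s μ)
    (hg : IntegrableOn g s μ) (hf₀ : ∀ y ∈ s, 0 ≤ f y) (hg₀ : ∀ y ∈ s, 0 ≤ g y)
    (hfg : ∀ y ∈ s, f y ≤ r * g y) (hgf : ∀ y ∈ s, g y ≤ r * f y) {x : α} (hx : x ∈ s) :
    (f x / ∫ y in s, f y ∂μ) / (g x / ∫ y in s, g y ∂μ) ≤ r ^ 2 := by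
  set F := ∫ y in s, f y ∂μ
  set G := ∫ y in s, g y ∂μ
  have hF₀ : 0 ≤ F := setIntegral_nonneg_of_ae_restrict (ae_restrict_of_forall_mem hs hf₀)
  have hG₀ : 0 ≤ G := setIntegral_nonneg_of_ae_restrict (ae_restrict_of_forall_mem hs hg₀)
  have hGF : G ≤ r * F := setIntegral_le_mul_setIntegral hs hg hf hgf
  rw [div_div_eq_mul_div, div_mul_eq_mul_div, div_div]
  rcases (mul_nonneg hF₀ (hg₀ x hx)).eq_or_lt with hzero | hpos
  · rw [← hzero, div_zero]
    positivity
  rw [div_le_iff₀ hpos]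
  calc f x * G ≤ (r * g x) * (r * F) :=
        mul_le_mul (hfg x hx) hGF hG₀ ((hf₀ x hx).trans (hfg x hx))
    _ = r ^ 2 * (F * g x) := by ring

end NormalizedRatio

section GaussianWeight

variable {E : Type*} [NormedAddCommGroup E] [InnerProductSpace ℝ E]

theorem norm_sub_sq_sub_norm_sub_sq (x a b : E) :
    ‖x - b‖ ^ 2 - ‖x - a‖ ^ 2 = inner ℝ (a - b) ((2 : ℝ) • x - a - b) := by
  simp only [← real_inner_self_eq_norm_sq, inner_sub_left, inner_sub_right, inner_smul_right,
    real_inner_comm x a, real_inner_comm x b, real_inner_comm a b]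
  ring

theorem exp_neg_norm_sub_sq_half_le {x a b : E} {t : ℝ}
    (h : ‖a - b‖ * ‖(2 : ℝ) • x - a - b‖ ≤ t) :
    Real.exp (-‖x - a‖ ^ 2 / 2) ≤ Real.exp (t / 2) * Real.exp (-‖x - b‖ ^ 2 / 2) := by
  rw [← Real.exp_add, Real.exp_le_exp]
  have := norm_sub_sq_sub_norm_sub_sq x a b ▸ real_inner_le_norm (a - b) ((2 : ℝ) • x - a - b)
  linarith

end GaussianWeight

theorem gaussian_density_ratio_bound_general
    {d : ℕ} (K : Set (EuclideanSpace ℝ (Fin d)))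
    (hKcomp : IsCompact K)
    (c c' : EuclideanSpace ℝ (Fin d))
    (Z Z' : ℝ)
    (hZ : Z = ∫ x in K, Real.exp (-‖x - c‖ ^ 2 / 2))
    (hZ' : Z' = ∫ x in K, Real.exp (-‖x - c'‖ ^ 2 / 2)) :
    ∀ x ∈ K,
      max ((Real.exp (-‖x - c‖ ^ 2 / 2) / Z) / (Real.exp (-‖x - c'‖ ^ 2 / 2) / Z'))
          ((Real.exp (-‖x - c'‖ ^ 2 / 2) / Z') / (Real.exp (-‖x - c‖ ^ 2 / 2) / Z)) ≤
        Real.exp (sSup ((fun y => ‖c - c'‖ * ‖(2 : ℝ) • y - c - c'‖) '' K)) := by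
  intro x hx
  set S := sSup ((fun y => ‖c - c'‖ * ‖(2 : ℝ) • y - c - c'‖) '' K)
  have hbdd : BddAbove ((fun y => ‖c - c'‖ * ‖(2 : ℝ) • y - c - c'‖) '' K) :=
    (hKcomp.image_of_continuousOn (by fun_prop)).bddAbove
  have hle : ∀ y ∈ K, ‖c - c'‖ * ‖(2 : ℝ) • y - c - c'‖ ≤ S :=
    fun y hy => le_csSup hbdd ⟨y, hy, rfl⟩
  have hle' : ∀ y ∈ K, ‖c' - c‖ * ‖(2 : ℝ) • y - c' - c‖ ≤ S := fun y hy => by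
    rw [norm_sub_rev c', sub_right_comm]
    exact hle y hy
  have hint (a : EuclideanSpace ℝ (Fin d)) :
      IntegrableOn (fun y => Real.exp (-‖y - a‖ ^ 2 / 2)) K :=
    ContinuousOn.integrableOn_compact hKcomp (by fun_prop)
  have hpos (a : EuclideanSpace ℝ (Fin d)) : ∀ y ∈ K, 0 ≤ Real.exp (-‖y - a‖ ^ 2 / 2) :=
    fun _ _ => (Real.exp_pos _).le
  have hsq : Real.exp (S / 2) ^ 2 = Real.exp S := by
    rw [← Real.exp_nat_mul]
    ring_nf
  subst hZ hZ'
  rw [← hsq]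
  exact max_le
    (normalized_ratio_le_sq hKcomp.measurableSet (hint c) (hint c') (hpos c) (hpos c')
      (fun y hy => exp_neg_norm_sub_sq_half_le (hle y hy))
      (fun y hy => exp_neg_norm_sub_sq_half_le (hle' y hy)) hx)
    (normalized_ratio_le_sq hKcomp.measurableSet (hint c') (hint c) (hpos c') (hpos c)
      (fun y hy => exp_neg_norm_sub_sq_half_le (hle' y hy))
      (fun y hy => exp_neg_norm_sub_sq_half_le (hle y hy)) hx)

/-- for the probability measures on `K` with densities proportional to
`exp(−‖x − c‖²/2)` and `exp(−‖x − c'‖²/2)`, both density ratios are bounded pointwise on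
`K` by `exp(sup_{y ∈ K} ‖c − c'‖·‖2y − c − c'‖)`. -/
theorem gaussian_density_ratio_bound
    {d : ℕ} (K : Set (EuclideanSpace ℝ (Fin d)))
    (hKcomp : IsCompact K) (hKconv : Convex ℝ K) (hKint : (interior K).Nonempty)
    (hKpos : 0 < volume K)
    (c c' : EuclideanSpace ℝ (Fin d))
    (Z Z' : ℝ)
    (hZ : Z = ∫ x in K, Real.exp (-‖x - c‖ ^ 2 / 2))
    (hZ' : Z' = ∫ x in K, Real.exp (-‖x - c'‖ ^ 2 / 2)) :
    ∀ x ∈ K,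
      max ((Real.exp (-‖x - c‖ ^ 2 / 2) / Z) / (Real.exp (-‖x - c'‖ ^ 2 / 2) / Z'))
          ((Real.exp (-‖x - c'‖ ^ 2 / 2) / Z') / (Real.exp (-‖x - c‖ ^ 2 / 2) / Z)) ≤
        Real.exp (sSup ((fun y => ‖c - c'‖ * ‖(2 : ℝ) • y - c - c'‖) '' K)) :=
  gaussian_density_ratio_bound_general K hKcomp c c' Z Z' hZ hZ'
end

section
/- Let u ∈ ℝ^d and let X be a random vector with density proportional to exp(−⟨u, x⟩) with respect to Lebesgue measure on K. Then E⟨u, X⟩ − min_{x∈K} ⟨u, x⟩ ≤ d. Equivalently, for a unit vector ℓ and temperature T > 0, if X has density proportional to exp(−⟨ℓ, x⟩/T) on K, then E⟨ℓ, X⟩ − min_{x∈K} ⟨ℓ, x⟩ ≤ d·T. -/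
/-!
Put `h x = ⟪u, x - x₀⟫` with `x₀` a minimiser of `⟪u, ·⟫` on `K`, and `Z t = ∫_K exp (-t h)`.
The homothety of ratio `t ≤ 1` about `x₀` maps `K` into itself and turns `exp (-h)` into
`exp (-t h)`, so `t ^ d Z t ≤ Z 1`. Since `exp (-t h) ≥ exp (-h) (1 + (1 - t) h)`, this gives
`t ^ d (Z 1 + (1 - t) ∫_K h exp (-h)) ≤ Z 1`, and Bernoulli's `1 - t ^ d ≤ d (1 - t)` yields
`t ^ d ∫_K h exp (-h) ≤ d Z 1`; let `t → 1`. The temperature is absorbed by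
replacing `h` with `h / T`.
-/

open MeasureTheory Set Module Filter Real Topology
open scoped RealInnerProductSpace

variable {E : Type*} [NormedAddCommGroup E] [NormedSpace ℝ E] [FiniteDimensional ℝ E]
  [MeasurableSpace E] [BorelSpace E] {μ : Measure E} [μ.IsAddHaarMeasure]

theorem pow_finrank_mul_setIntegral_comp_homothety_le {K : Set E} (hKm : MeasurableSet K)
    (hKconv : Convex ℝ K) {x₀ : E} (hx₀ : x₀ ∈ K) {t : ℝ} (ht₀ : 0 < t) (ht₁ : t ≤ 1)
    {g : E → ℝ} (hg₀ : ∀ x ∈ K, 0 ≤ g x) (hg : IntegrableOn g K μ) :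
    t ^ finrank ℝ E * ∫ x in K, g (x₀ + t • (x - x₀)) ∂μ ≤ ∫ x in K, g x ∂μ := by
  set f : E → E := fun x => x₀ + t • (x - x₀)
  have hf_maps : f '' K ⊆ K := by
    rintro _ ⟨y, hy, rfl⟩
    have hcomb : f y = (1 - t) • x₀ + t • y := by simp only [f]; module
    rw [hcomb]
    exact hKconv hx₀ hy (by linarith) ht₀.le (by ring)
  have hf_deriv : ∀ y ∈ K, HasFDerivWithinAt f (t • ContinuousLinearMap.id ℝ E) K y :=
    fun y _ => ((((hasFDerivAt_id y).sub_const x₀).const_smul t).const_add x₀).hasFDerivWithinAt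
  have hf_inj : InjOn f K := fun a _ b _ hab => by
    simpa using smul_right_injective E ht₀.ne' (add_left_cancel hab)
  have hdet : (t • ContinuousLinearMap.id ℝ E).det = t ^ finrank ℝ E := by
    rw [ContinuousLinearMap.det, ContinuousLinearMap.toLinearMap_smul, ContinuousLinearMap.coe_id,
      LinearMap.det_smul, LinearMap.det_id, mul_one]
  have hchange := integral_image_eq_integral_abs_det_fderiv_smul μ hKm hf_deriv hf_inj g
  rw [hdet, abs_of_pos (pow_pos ht₀ _)] at hchange
  simp only [smul_eq_mul, integral_const_mul] at hchange
  rw [← hchange]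
  exact setIntegral_mono_set hg (ae_restrict_of_forall_mem hKm hg₀) hf_maps.eventuallyLE

theorem exp_neg_mul_one_add_le_exp_neg_mul (a t : ℝ) :
    exp (-a) * (1 + (1 - t) * a) ≤ exp (-(t * a)) :=
  calc exp (-a) * (1 + (1 - t) * a)
      ≤ exp (-a) * exp ((1 - t) * a) := by
        gcongr
        linarith [add_one_le_exp ((1 - t) * a)]
    _ = exp (-(t * a)) := by rw [← exp_add]; congr 1; ring

theorem setIntegral_mul_exp_neg_le_finrank_mul {K : Set E} (hK : IsCompact K)
    (hKconv : Convex ℝ K) {h : E → ℝ} (hh : Continuous h) {x₀ : E} (hx₀ : x₀ ∈ K)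
    (hhom : ∀ (t : ℝ) (y : E), h (x₀ + t • (y - x₀)) = t * h y) :
    ∫ x in K, h x * exp (-h x) ∂μ ≤ finrank ℝ E * ∫ x in K, exp (-h x) ∂μ := by
  set d := finrank ℝ E
  set A := ∫ x in K, h x * exp (-h x) ∂μ
  set Z := ∫ x in K, exp (-h x) ∂μ
  have hint : ∀ f : E → ℝ, Continuous f → IntegrableOn f K μ :=
    fun f hf => hf.continuousOn.integrableOn_compact hK
  have hZ₀ : 0 ≤ Z := setIntegral_nonneg hK.measurableSet fun x _ => (exp_pos _).le
  have hbound : ∀ t ∈ Ioo (0 : ℝ) 1, t ^ d * A ≤ d * Z := by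
    rintro t ⟨ht₀, ht₁⟩
    have hscale : t ^ d * ∫ x in K, exp (-(t * h x)) ∂μ ≤ Z := by
      simpa only [hhom] using pow_finrank_mul_setIntegral_comp_homothety_le hK.measurableSet
        hKconv hx₀ ht₀ ht₁.le (fun x _ => (exp_pos (-h x)).le) (hint _ (by fun_prop))
    have hlower : Z + (1 - t) * A ≤ ∫ x in K, exp (-(t * h x)) ∂μ := by
      rw [← integral_const_mul, ← integral_add (hint _ (by fun_prop)) (hint _ (by fun_prop))]
      refine setIntegral_mono_on (hint _ (by fun_prop)) (hint _ (by fun_prop))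
        hK.measurableSet fun x _ => ?_
      linarith [exp_neg_mul_one_add_le_exp_neg_mul (h x) t]
    have hbernoulli : 1 - t ^ d ≤ d * (1 - t) := by
      have := one_add_mul_le_pow (a := t - 1) (by linarith) d
      rw [add_sub_cancel] at this
      linarith
    have : (1 - t) * (t ^ d * A) ≤ (1 - t) * (d * Z) :=
      calc (1 - t) * (t ^ d * A) ≤ (1 - t ^ d) * Z := by
            linarith [mul_le_mul_of_nonneg_left hlower (pow_nonneg ht₀.le d)]
        _ ≤ (1 - t) * (d * Z) := by linarith [mul_le_mul_of_nonneg_right hbernoulli hZ₀]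
    exact le_of_mul_le_mul_left this (by linarith)
  have hlim : Tendsto (fun t : ℝ => t ^ d * A) (𝓝[<] 1) (𝓝 A) := by
    simpa using (((continuous_pow d).tendsto 1).mul_const A).mono_left nhdsWithin_le_nhds
  exact le_of_tendsto hlim <| mem_of_superset (Ioo_mem_nhdsLT one_pos) hbound

theorem setIntegral_mul_exp_neg_div_le {K : Set E} (hK : IsCompact K) (hKconv : Convex ℝ K)
    (φ : E →L[ℝ] ℝ) {x₀ : E} (hx₀ : x₀ ∈ K) {T : ℝ} (hT : 0 < T) :
    ∫ x in K, φ x * exp (-φ x / T) ∂μ ≤ (finrank ℝ E * T + φ x₀) * ∫ x in K, exp (-φ x / T) ∂μ := by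
  set h : E → ℝ := fun x => (φ x - φ x₀) / T
  set c := exp (-φ x₀ / T)
  have hh : Continuous h := by fun_prop
  have hhom : ∀ (t : ℝ) (y : E), h (x₀ + t • (y - x₀)) = t * h y := fun t y => by
    simp only [h, map_add, map_smul, map_sub, smul_eq_mul]
    ring
  have hint : ∀ f : E → ℝ, Continuous f → IntegrableOn f K μ :=
    fun f hf => hf.continuousOn.integrableOn_compact hK
  have hexp : ∀ x, exp (-φ x / T) = c * exp (-h x) := fun x => by
    rw [← exp_add]
    congr 1
    ring
  have hφ : ∀ x, φ x = T * h x + φ x₀ := fun x => by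
    simp only [h]
    field_simp
    ring
  have hZ : ∫ x in K, exp (-φ x / T) ∂μ = c * ∫ x in K, exp (-h x) ∂μ := by
    simp only [hexp, integral_const_mul]
  calc ∫ x in K, φ x * exp (-φ x / T) ∂μ
      = ∫ x in K, c * (T * (h x * exp (-h x)) + φ x₀ * exp (-h x)) ∂μ := by
        congr 1
        ext x
        rw [hexp, hφ x]
        ring
    _ = c * (T * ∫ x in K, h x * exp (-h x) ∂μ + φ x₀ * ∫ x in K, exp (-h x) ∂μ) := by
        rw [integral_const_mul, integral_add ((hint _ (by fun_prop)).const_mul _)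
          ((hint _ (by fun_prop)).const_mul _), integral_const_mul, integral_const_mul]
    _ ≤ c * (T * (finrank ℝ E * ∫ x in K, exp (-h x) ∂μ) + φ x₀ * ∫ x in K, exp (-h x) ∂μ) := by
        gcongr
        exact setIntegral_mul_exp_neg_le_finrank_mul hK hKconv hh hx₀ hhom
    _ = (finrank ℝ E * T + φ x₀) * ∫ x in K, exp (-φ x / T) ∂μ := by
        rw [hZ]
        ring

theorem setIntegral_mul_exp_neg_div_div_sub_le {K : Set E} (hK : IsCompact K)
    (hKconv : Convex ℝ K) (hKpos : 0 < μ K) (φ : E →L[ℝ] ℝ) {x₀ : E} (hx₀ : x₀ ∈ K) {T : ℝ}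
    (hT : 0 < T) :
    (∫ x in K, φ x * exp (-φ x / T) ∂μ) / (∫ x in K, exp (-φ x / T) ∂μ) - φ x₀ ≤
      finrank ℝ E * T := by
  have : NeZero (μ.restrict K) := ⟨by simpa [Measure.restrict_eq_zero] using hKpos.ne'⟩
  have hZ : 0 < ∫ x in K, exp (-φ x / T) ∂μ :=
    integral_exp_pos ((by fun_prop : Continuous fun x => exp (-φ x / T)).continuousOn
      |>.integrableOn_compact hK)
  rw [sub_le_iff_le_add, div_le_iff₀ hZ]
  linarith [setIntegral_mul_exp_neg_div_le (μ := μ) hK hKconv φ hx₀ hT]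

theorem annealing_expectation_bound_general
    {d : ℕ} (K : Set (EuclideanSpace ℝ (Fin d)))
    (hKcomp : IsCompact K) (hKconv : Convex ℝ K)
    (hKpos : 0 < volume K)
    (u : EuclideanSpace ℝ (Fin d)) :
    ((∫ x in K, ⟪u, x⟫ * Real.exp (-⟪u, x⟫)) / (∫ x in K, Real.exp (-⟪u, x⟫)) -
        sInf ((fun x => ⟪u, x⟫) '' K) ≤ (d : ℝ)) ∧
    (∀ (l : EuclideanSpace ℝ (Fin d)) (T : ℝ), ‖l‖ = 1 → 0 < T →
      (∫ x in K, ⟪l, x⟫ * Real.exp (-⟪l, x⟫ / T)) / (∫ x in K, Real.exp (-⟪l, x⟫ / T)) -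
          sInf ((fun x => ⟪l, x⟫) '' K) ≤ (d : ℝ) * T) := by
  have hKne : K.Nonempty := nonempty_of_measure_ne_zero hKpos.ne'
  have hbound : ∀ (v : EuclideanSpace ℝ (Fin d)) (T : ℝ), 0 < T →
      (∫ x in K, ⟪v, x⟫ * exp (-⟪v, x⟫ / T)) / (∫ x in K, exp (-⟪v, x⟫ / T)) -
        sInf ((fun x => ⟪v, x⟫) '' K) ≤ d * T := by
    intro v T hT
    obtain ⟨x₀, hx₀, hmin⟩ :=
      (hKcomp.image (innerSL ℝ v).continuous).sInf_mem (hKne.image (innerSL ℝ v))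
    have hx₀_sInf : ⟪v, x₀⟫ = sInf ((fun x => ⟪v, x⟫) '' K) := hmin
    simpa [hx₀_sInf] using setIntegral_mul_exp_neg_div_div_sub_le hKcomp hKconv hKpos
      (innerSL ℝ v) hx₀ hT
  exact ⟨by simpa using hbound u 1 one_pos, fun l T _ hT => hbound l T hT⟩

/-- if `X` has density proportional to `exp(−⟨u, x⟩)` on `K`, then
`E⟨u, X⟩ − min_{x ∈ K} ⟨u, x⟩ ≤ d`; equivalently, for a unit vector `ℓ` and temperature
`T > 0`, if `X` has density proportional to `exp(−⟨ℓ, x⟩/T)` on `K`, then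
`E⟨ℓ, X⟩ − min_{x ∈ K} ⟨ℓ, x⟩ ≤ d·T`. -/
theorem annealing_expectation_bound
    {d : ℕ} (K : Set (EuclideanSpace ℝ (Fin d)))
    (hKcomp : IsCompact K) (hKconv : Convex ℝ K) (hKint : (interior K).Nonempty)
    (hKpos : 0 < volume K)
    (u : EuclideanSpace ℝ (Fin d)) :
    ((∫ x in K, ⟪u, x⟫ * Real.exp (-⟪u, x⟫)) / (∫ x in K, Real.exp (-⟪u, x⟫)) -
        sInf ((fun x => ⟪u, x⟫) '' K) ≤ (d : ℝ)) ∧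
    (∀ (l : EuclideanSpace ℝ (Fin d)) (T : ℝ), ‖l‖ = 1 → 0 < T →
      (∫ x in K, ⟪l, x⟫ * Real.exp (-⟪l, x⟫ / T)) / (∫ x in K, Real.exp (-⟪l, x⟫ / T)) -
          sInf ((fun x => ⟪l, x⟫) '' K) ≤ (d : ℝ) * T) :=
  annealing_expectation_bound_general K hKcomp hKconv hKpos u
end
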